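/- arXiv:1906.03888 — 9 statements merged into one kernel-verified Lean document; each statement's English description precedes it below -/
import Mathlib

section
/- Let ⪯ be any well-order of ℚ of order type ω (for instance induced by an enumeration x₀, x₁, … of ℚ). Colour each pair a < b of rationals red if a ⪯ b and blue if b ⪯ a. Then every X ⊆ ℚ that is order-isomorphic to (ℚ, ≤) contains both a red pair and a blue pair. -/
/-!
Fix any `x ∈ X`. Since `X ≅ ℚ` has no endpoints, infinitely many points of `X` lie above `x`
and infinitely many below, while only finitely many rationals precede `x` in `⪯`. So some
`b > x` in `X` has `x ⪯ b` (a red pair) and some `a < x` in `X` has `x ⪯ a` (a blue pair).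
-/

theorem Set.Infinite.exists_mem_rel_of_finite_setOf_rel {α : Type*} {r : α → α → Prop}
    [Std.Total r] {x : α} (hx : {y | r y x}.Finite) {s : Set α} (hs : s.Infinite) :
    ∃ b ∈ s, r x b := by
  obtain ⟨b, hbs, hbx⟩ := (hs.sdiff hx).nonempty
  exact ⟨b, hbs, (total_of r x b).resolve_right hbx⟩

namespace OrderIso

variable {α β : Type*} [Preorder α] [Preorder β] {X : Set α}

theorem infinite_setOf_mem_lt [NoMaxOrder β] (e : X ≃o β) (x : X) :
    {y | y ∈ X ∧ (x : α) < y}.Infinite := by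
  have hIoi : (Set.Ioi x).Infinite := by
    simpa [e.symm.image_Ioi] using (Set.Ioi_infinite (e x)).image e.symm.injective.injOn
  refine (hIoi.image Subtype.val_injective.injOn).mono ?_
  rintro _ ⟨y, hxy, rfl⟩
  exact ⟨y.2, hxy⟩

theorem infinite_setOf_mem_gt [NoMinOrder β] (e : X ≃o β) (x : X) :
    {y | y ∈ X ∧ y < (x : α)}.Infinite := by
  have hIio : (Set.Iio x).Infinite := by
    simpa [e.symm.image_Iio] using (Set.Iio_infinite (e x)).image e.symm.injective.injOn
  refine (hIio.image Subtype.val_injective.injOn).mono ?_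
  rintro _ ⟨y, hyx, rfl⟩
  exact ⟨y.2, hyx⟩

end OrderIso

/-- Let `⪯` be a well-order of `ℚ` of order type `ω`. Colouring a pair `a < b` red when
`a ⪯ b` and blue when `b ⪯ a`, every `X ⊆ ℚ` order-isomorphic to `(ℚ, ≤)` contains both
a red pair and a blue pair. -/
theorem red_and_blue_pairs_in_every_copy (pre : ℚ → ℚ → Prop)
    (hlin : IsLinearOrder ℚ pre) (homega : ∀ x : ℚ, {y : ℚ | pre y x}.Finite)
    (X : Set ℚ) (hX : Nonempty (↥X ≃o ℚ)) :
    (∃ a ∈ X, ∃ b ∈ X, a < b ∧ pre a b) ∧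
    (∃ a ∈ X, ∃ b ∈ X, a < b ∧ pre b a) := by
  obtain ⟨e⟩ := hX
  have := hlin
  let x : X := e.symm 0
  obtain ⟨b, ⟨hbX, hxb⟩, hred⟩ :=
    (e.infinite_setOf_mem_lt x).exists_mem_rel_of_finite_setOf_rel (homega x)
  obtain ⟨a, ⟨haX, hax⟩, hblue⟩ :=
    (e.infinite_setOf_mem_gt x).exists_mem_rel_of_finite_setOf_rel (homega x)
  exact ⟨⟨x, x.2, b, hbX, hxb, hred⟩, ⟨a, haX, x, x.2, hax, hblue⟩⟩
end

section
/- Let (V, ≤) be a linear order and (V, ⪯) a well-order, and define the relation ⊑ on V by: a ⊑ b iff a ⪯ b and there is no c strictly ≤-between a and b with c ⪯ a and c ⪯ b. Then (V, ⊑) is a tree: ⊑ is a partial order whose minimum element is the ⪯-least element of V, and for every a ∈ V the set {b : b ⊑ a} is well-ordered by ⊑. -/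
universe u

/-- `c` is strictly `le`-between `a` and `b`. -/
def strictlyBetween {α : Type u} (le : α → α → Prop) (a c b : α) : Prop :=
  (le a c ∧ le c b ∧ c ≠ a ∧ c ≠ b) ∨ (le b c ∧ le c a ∧ c ≠ a ∧ c ≠ b)

/-- The tree relation `⊑` of `T(V, ≤, ⪯)`: `a ⊑ b` iff `a ⪯ b` and there is no `c`
strictly `≤`-between `a` and `b` with `c ⪯ a` and `c ⪯ b`. -/
def treeRel {α : Type u} (le pre : α → α → Prop) (a b : α) : Prop :=
  pre a b ∧ ¬∃ c, strictlyBetween le a c b ∧ pre c a ∧ pre c b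

/-- `s` is well-ordered by `r` (`r` is a reflexive `≤`-style relation):
`r` is total on `s` and every nonempty subset of `s` has an `r`-least element. -/
def IsWellOrderedOn {α : Type u} (r : α → α → Prop) (s : Set α) : Prop :=
  (∀ a ∈ s, ∀ b ∈ s, r a b ∨ r b a) ∧
  ∀ t : Set α, t ⊆ s → t.Nonempty → ∃ m ∈ t, ∀ x ∈ t, r m x

/-- `r` is a (set-theoretic, rooted) tree order: a partial order with a minimum element
in which the set of predecessors of every element is well-ordered. -/
def IsTreeOrder {α : Type u} (r : α → α → Prop) : Prop :=
  IsPartialOrder α r ∧ (∃ root, ∀ a, r root a) ∧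
  ∀ a, IsWellOrderedOn r {b | r b a}

/-- `a` is a leaf of the tree order `r`: it has no strict successor. -/
def isLeaf {α : Type u} (r : α → α → Prop) (a : α) : Prop := ∀ b, r a b → b = a

/-- `b` is a son (immediate successor) of `a` in the tree order `r`. -/
def isSon {α : Type u} (r : α → α → Prop) (a b : α) : Prop :=
  r a b ∧ a ≠ b ∧ ∀ c, r a c → r c b → c = a ∨ c = b

/-- `a` has exactly two sons in the tree order `r`. -/
def hasTwoSons {α : Type u} (r : α → α → Prop) (a : α) : Prop :=
  ∃ b c, b ≠ c ∧ isSon r a b ∧ isSon r a c ∧ ∀ d, isSon r a d → d = b ∨ d = c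

/-- `(le, pre)` is a compatible pair of orders: `le` is a linear order, `pre` a preorder,
`T(V, le, pre)` is defined (i.e. `treeRel le pre` is a tree order), and every element
is either a leaf or has exactly two sons. -/
def CompatPair {α : Type u} (le pre : α → α → Prop) : Prop :=
  IsLinearOrder α le ∧ IsPreorder α pre ∧ IsTreeOrder (treeRel le pre) ∧
  ∀ a, isLeaf (treeRel le pre) a ∨ hasTwoSons (treeRel le pre) a

/-- `m` is the meet of `a` and `b` in the tree order `r`. -/
def isMeet {α : Type u} (r : α → α → Prop) (a b m : α) : Prop :=
  r m a ∧ r m b ∧ ∀ x, r x a → r x b → r x m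

/-- `C` is closed under the meet operation of the tree order `r`. -/
def MeetClosed {α : Type u} (r : α → α → Prop) (C : Set α) : Prop :=
  ∀ a ∈ C, ∀ b ∈ C, ∀ m, isMeet r a b m → m ∈ C

/-!
By totality of `≤`, an element `d ≠ b` strictly between `a` and `c` is strictly between `a` and
`b` or strictly between `b` and `c`, so a witness against `a ⊑ c` is a witness against `a ⊑ b`
or against `b ⊑ c`; this gives transitivity. The same splitting shows that on the predecessors of a fixed `a` the relation
`⊑` coincides with `⪯`, so the predecessor sets inherit linearity and well-foundedness from `⪯`.
The `⪯`-least element lies below everything because no `c ≠ r` satisfies `c ⪯ r`.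
-/

section TreeRel

variable {α : Type u} {le pre : α → α → Prop} {a b c : α}

theorem strictlyBetween.ne_left (h : strictlyBetween le a c b) : c ≠ a :=
  h.elim (·.2.2.1) (·.2.2.1)

theorem strictlyBetween.symm (h : strictlyBetween le a c b) : strictlyBetween le b c a := by
  rcases h with ⟨hac, hcb, hca, hcb'⟩ | ⟨hbc, hca, hca', hcb⟩
  · exact Or.inr ⟨hac, hcb, hcb', hca⟩
  · exact Or.inl ⟨hbc, hca, hcb, hca'⟩

theorem not_strictlyBetween_self [Std.Antisymm le] : ¬strictlyBetween le a c a := by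
  rintro (⟨hac, hca, hne, -⟩ | ⟨hac, hca, hne, -⟩) <;> exact hne (antisymm_of le hca hac)

theorem strictlyBetween.eq_or_left_or_right [Std.Total le] (h : strictlyBetween le a c b)
    (z : α) : c = z ∨ strictlyBetween le a c z ∨ strictlyBetween le z c b := by
  by_cases hcz : c = z
  · exact Or.inl hcz
  rcases h with ⟨hac, hcb, hca, hcb'⟩ | ⟨hbc, hca, hca', hcb⟩ <;>
    rcases total_of le c z with hz | hz
  · exact Or.inr (Or.inl (Or.inl ⟨hac, hz, hca, hcz⟩))
  · exact Or.inr (Or.inr (Or.inl ⟨hz, hcb, hcz, hcb'⟩))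
  · exact Or.inr (Or.inr (Or.inr ⟨hbc, hz, hcz, hcb⟩))
  · exact Or.inr (Or.inl (Or.inr ⟨hz, hca, hca', hcz⟩))

theorem treeRel_refl [Std.Antisymm le] [Std.Refl pre] (a : α) : treeRel le pre a a :=
  ⟨refl_of pre a, fun ⟨_, hc, _⟩ => not_strictlyBetween_self hc⟩

theorem treeRel_antisymm [Std.Antisymm pre] (hab : treeRel le pre a b)
    (hba : treeRel le pre b a) : a = b :=
  antisymm_of pre hab.1 hba.1

theorem treeRel_trans [Std.Total le] [IsTrans α pre] [Std.Antisymm pre]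
    (hab : treeRel le pre a b) (hbc : treeRel le pre b c) : treeRel le pre a c := by
  refine ⟨trans_of pre hab.1 hbc.1, ?_⟩
  rintro ⟨d, hd, hda, hdc⟩
  rcases hd.eq_or_left_or_right b with rfl | hd' | hd'
  · exact hd.ne_left (antisymm_of pre hda hab.1)
  · exact hab.2 ⟨d, hd', hda, trans_of pre hda hab.1⟩
  · exact hbc.2 ⟨d, hd', trans_of pre hda hab.1, hdc⟩

instance isPartialOrder_treeRel [IsLinearOrder α le] [IsPartialOrder α pre] :
    IsPartialOrder α (treeRel le pre) where
  refl := treeRel_refl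
  trans _ _ _ := treeRel_trans
  antisymm _ _ := treeRel_antisymm

theorem treeRel_of_pre [Std.Total le] [IsTrans α pre] [Std.Antisymm pre]
    (hb : treeRel le pre b a) (hc : treeRel le pre c a) (hbc : pre b c) :
    treeRel le pre b c := by
  refine ⟨hbc, ?_⟩
  rintro ⟨d, hd, hdb, hdc⟩
  rcases hd.eq_or_left_or_right a with rfl | hd' | hd'
  · exact hd.ne_left (antisymm_of pre hdb hb.1)
  · exact hb.2 ⟨d, hd', hdb, trans_of pre hdb hb.1⟩
  · exact hc.2 ⟨d, hd'.symm, hdc, trans_of pre hdc hc.1⟩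

theorem treeRel_of_forall_pre [Std.Antisymm pre] (hr : ∀ x, pre a x) (b : α) :
    treeRel le pre a b :=
  ⟨hr b, fun ⟨_, hc, hca, _⟩ => hc.ne_left (antisymm_of pre hca (hr _))⟩

theorem isWellOrderedOn_treeRel_pred [Std.Total le] [IsLinearOrder α pre]
    (hwo : ∀ s : Set α, s.Nonempty → ∃ m ∈ s, ∀ x ∈ s, pre m x) (a : α) :
    IsWellOrderedOn (treeRel le pre) {b | treeRel le pre b a} := by
  refine ⟨fun b hb c hc => ?_, fun t hts ht => ?_⟩
  · exact (total_of pre b c).imp (treeRel_of_pre hb hc) (treeRel_of_pre hc hb)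
  · obtain ⟨m, hmt, hm⟩ := hwo t ht
    exact ⟨m, hmt, fun x hxt => treeRel_of_pre (hts hmt) (hts hxt) (hm x hxt)⟩

end TreeRel

/-- For a linear order `(V, ≤)` and a well-order `(V, ⪯)`, the relation `⊑` of
`T(V, ≤, ⪯)` is a tree order: a partial order whose minimum element is the `⪯`-least
element of `V`, with all predecessor sets well-ordered by `⊑`. -/
theorem treeRel_isTree {V : Type u} [Nonempty V] (le pre : V → V → Prop)
    (hle : IsLinearOrder V le) (hpre : IsLinearOrder V pre)
    (hwo : ∀ s : Set V, s.Nonempty → ∃ m ∈ s, ∀ x ∈ s, pre m x) :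
    IsPartialOrder V (treeRel le pre) ∧
    (∃ r : V, (∀ x, pre r x) ∧ ∀ a, treeRel le pre r a) ∧
    (∀ a, IsWellOrderedOn (treeRel le pre) {b | treeRel le pre b a}) := by
  obtain ⟨r, -, hr⟩ := hwo Set.univ Set.univ_nonempty
  have hr_least : ∀ x, pre r x := fun x => hr x trivial
  exact ⟨inferInstance, ⟨r, hr_least, treeRel_of_forall_pre hr_least⟩,
    isWellOrderedOn_treeRel_pred hwo⟩
end

section
/- Let (V, ≤) be a linear order and (V, ⪯) a well-order, and let ⊑ be the tree order of T(V, ≤, ⪯). Then every two elements a, b ∈ V have a meet a ∧ b in (V, ⊑): the set of common ⊑-lower bounds of a and b is nonempty and has a ⊑-maximum. -/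
universe u

/-!
The meet of `a` and `b` is the `⪯`-least element `m` of the closed `≤`-interval `[a, b]`.
Everything rests on reading `x ⊑ y` as "`x` is `⪯`-least on `[x, y]`". Then `m ⊑ a` and
`m ⊑ b` because `[m, a]` and `[m, b]` lie inside `[a, b]`; and a common lower bound `x` of `a`
and `b` is `⪯`-least on `[x, a] ∪ [x, b]`, which contains `[a, b]` and hence `[x, m]`.
-/

open Set
open scoped Interval

noncomputable abbrev linearOrderOfIsLinearOrder {α : Type u} (r : α → α → Prop)
    [IsLinearOrder α r] : LinearOrder α where
  le := r
  le_refl := refl_of r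
  le_trans _ _ _ := trans_of r
  le_antisymm _ _ := antisymm
  le_total := total_of r
  toDecidableLE := Classical.decRel r

section treeRel

variable {α : Type u} [LinearOrder α] {pre : α → α → Prop} [IsLinearOrder α pre]

lemma strictlyBetween_iff {a b c : α} :
    strictlyBetween (· ≤ ·) a c b ↔ c ∈ [[a, b]] ∧ c ≠ a ∧ c ≠ b := by
  simp only [strictlyBetween, mem_uIcc]
  tauto

lemma treeRel_iff_forall_uIcc {a b : α} :
    treeRel (· ≤ ·) pre a b ↔ ∀ c ∈ [[a, b]], pre a c := by
  simp only [treeRel, strictlyBetween_iff]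
  constructor
  · rintro ⟨hab, hno⟩ c hc
    by_cases hca : c = a
    · exact hca ▸ refl_of pre c
    by_cases hcb : c = b
    · exact hcb ▸ hab
    refine (total_of pre a c).resolve_right fun hca' => hno ⟨c, ⟨hc, hca, hcb⟩, hca', ?_⟩
    exact trans_of pre hca' hab
  · intro h
    refine ⟨h b right_mem_uIcc, ?_⟩
    rintro ⟨c, ⟨hc, hca, -⟩, hpca, -⟩
    exact hca (antisymm hpca (h c hc))

lemma treeRel_left_of_forall_uIcc {a b m : α} (hm : m ∈ [[a, b]])
    (hmin : ∀ c ∈ [[a, b]], pre m c) :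
    treeRel (· ≤ ·) pre m a :=
  treeRel_iff_forall_uIcc.2 fun c hc =>
    hmin c (uIcc_subset_uIcc hm left_mem_uIcc hc)

lemma treeRel_of_mem_uIcc {x a b m : α} (hxa : treeRel (· ≤ ·) pre x a)
    (hxb : treeRel (· ≤ ·) pre x b) (hm : m ∈ [[a, b]]) : treeRel (· ≤ ·) pre x m := by
  rw [treeRel_iff_forall_uIcc] at hxa hxb ⊢
  intro c hc
  have hsub : [[x, m]] ⊆ [[x, a]] ∪ [[x, b]] :=
    calc [[x, m]] ⊆ [[x, a]] ∪ [[a, m]] := uIcc_subset_uIcc_union_uIcc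
      _ ⊆ [[x, a]] ∪ [[a, b]] := union_subset_union_right _ (uIcc_subset_uIcc_left hm)
      _ ⊆ [[x, a]] ∪ ([[a, x]] ∪ [[x, b]]) :=
        union_subset_union_right _ uIcc_subset_uIcc_union_uIcc
      _ = [[x, a]] ∪ [[x, b]] := by rw [uIcc_comm a x, ← union_assoc, union_self]
  rcases hsub hc with hc | hc
  · exact hxa c hc
  · exact hxb c hc

end treeRel

/-- For a linear order `(V, ≤)` and a well-order `(V, ⪯)`, every two elements of the tree
`T(V, ≤, ⪯)` have a meet: the set of common `⊑`-lower bounds is nonempty and has a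
`⊑`-maximum. -/
theorem treeRel_meets_exist {V : Type u} (le pre : V → V → Prop)
    (hle : IsLinearOrder V le) (hpre : IsLinearOrder V pre)
    (hwo : ∀ s : Set V, s.Nonempty → ∃ m ∈ s, ∀ x ∈ s, pre m x) :
    ∀ a b : V, ∃ m : V, isMeet (treeRel le pre) a b m := by
  let _ : LinearOrder V := linearOrderOfIsLinearOrder le
  intro a b
  obtain ⟨m, hm, hmin⟩ := hwo [[a, b]] nonempty_uIcc
  refine ⟨m, treeRel_left_of_forall_uIcc hm hmin, ?_,
    fun x hxa hxb => treeRel_of_mem_uIcc hxa hxb hm⟩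
  rw [uIcc_comm] at hm hmin
  exact treeRel_left_of_forall_uIcc hm hmin
end

section
/- Let ⪯ be any well-order of ℚ of order type ω and let ⊑ be the tree order of T(ℚ, ≤, ⪯). Then every element a ∈ ℚ has exactly two immediate ⊑-successors in T(ℚ, ≤, ⪯): one that is ≤-smaller than a and one that is ≤-larger than a. In particular, T(ℚ, ≤, ⪯) is an infinite binary tree, regardless of the choice of the well-order. -/
universe u

/-! For `a < x`, `a ⊑ x` says that `a ⪯ x` and no element of the open interval `(a, x)` is
`⪯ a`. Since only finitely many elements are `⪯ a`, density yields such `x`, and the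
`⪯`-least of them is the unique immediate successor of `a` to its right; the left side is the
same statement for the reversed order `≤ᵒᵈ`, which induces the same tree. -/

section WellOrder

variable {α : Type*} {pre : α → α → Prop}

theorem wellFounded_of_finite_lowerSets [IsPartialOrder α pre]
    (hfin : ∀ x, {y | pre y x}.Finite) : WellFounded fun x y => pre x y ∧ x ≠ y := by
  refine Subrelation.wf (fun {x y} hxy => ?_)
    (InvImage.wf (fun x => {y | pre y x}.ncard) wellFounded_lt)
  refine Set.ncard_lt_ncard ⟨fun z hz => _root_.trans_of pre hz hxy.1, fun hyx => hxy.2 ?_⟩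
    (hfin y)
  exact antisymm_of pre hxy.1 (hyx (refl_of pre y))

theorem exists_pre_minimum [IsLinearOrder α pre] (hfin : ∀ x, {y | pre y x}.Finite)
    {S : Set α} (hS : S.Nonempty) : ∃ m ∈ S, ∀ x ∈ S, pre m x := by
  obtain ⟨m, hmS, hmin⟩ := (wellFounded_of_finite_lowerSets hfin).has_min S hS
  refine ⟨m, hmS, fun x hx => by_contra fun hmx => hmin x hx ⟨?_, ?_⟩⟩
  · exact (total_of pre m x).resolve_left hmx
  · rintro rfl
    exact hmx (refl_of pre x)

end WellOrder

theorem treeRel_flip {α : Type*} (le pre : α → α → Prop) :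
    treeRel (flip le) pre = treeRel le pre := by
  have hbtw : ∀ a c b, strictlyBetween (flip le) a c b ↔ strictlyBetween le a c b := by
    intro a c b
    simp only [strictlyBetween, flip]
    tauto
  ext a b
  simp only [treeRel, hbtw]

theorem exists_gt_forall_lt_of_finite {α : Type*} [LinearOrder α] [DenselyOrdered α]
    [NoMaxOrder α] {F : Set α} (hF : F.Finite) (a : α) :
    ∃ x, a < x ∧ ∀ c ∈ F, a < c → x < c := by
  induction F, hF using Set.Finite.induction_on with
  | empty => simpa using exists_gt a
  | @insert c F _ _ ih =>
    obtain ⟨x, hax, hx⟩ := ih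
    by_cases hac : a < c
    · obtain ⟨y, hay, hy⟩ := exists_between (lt_min hax hac)
      refine ⟨y, hay, ?_⟩
      rintro d (rfl | hd) had
      · exact hy.trans_le (min_le_right _ _)
      · exact hy.trans_le (min_le_left _ _) |>.trans (hx d hd had)
    · exact ⟨x, hax, by rintro d (rfl | hd) had; exacts [absurd had hac, hx d hd had]⟩

theorem strictlyBetween_le_iff {α : Type*} [LinearOrder α] {a c b : α} :
    strictlyBetween (· ≤ ·) a c b ↔ a < c ∧ c < b ∨ b < c ∧ c < a := by
  simp only [strictlyBetween, lt_iff_le_and_ne]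
  grind

section Tree

variable {α : Type*} [LinearOrder α] {pre : α → α → Prop}

local notation "T" => treeRel (· ≤ ·) pre

theorem treeRel_iff_of_lt [IsTrans α pre] {a x : α} (hax : a < x) :
    T a x ↔ pre a x ∧ ∀ c, a < c → c < x → ¬pre c a := by
  simp only [treeRel, strictlyBetween_le_iff]
  constructor
  · rintro ⟨hpax, hnone⟩
    exact ⟨hpax, fun c hac hcx hca =>
      hnone ⟨c, Or.inl ⟨hac, hcx⟩, hca, _root_.trans_of pre hca hpax⟩⟩
  · rintro ⟨hpax, hnone⟩
    refine ⟨hpax, ?_⟩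
    rintro ⟨c, ⟨hac, hcx⟩ | ⟨hxc, hca⟩, hpca, -⟩
    · exact hnone c hac hcx hpca
    · exact (hax.trans hxc).not_gt hca

theorem treeRel_of_lt_of_le [IsTrans α pre] [Std.Total pre] {a c x : α} (hac : a < c)
    (hcx : c ≤ x) (h : T a x) : T a c := by
  obtain rfl | hcx := hcx.eq_or_lt
  · exact h
  obtain ⟨hpax, hnone⟩ := (treeRel_iff_of_lt (hac.trans hcx)).1 h
  exact (treeRel_iff_of_lt hac).2 ⟨(total_of pre a c).resolve_right (hnone c hac hcx),
    fun e hae hec => hnone e hae (hec.trans hcx)⟩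

variable [IsLinearOrder α pre] [DenselyOrdered α] (hfin : ∀ x, {y | pre y x}.Finite)
include hfin

theorem exists_gt_treeRel [NoMaxOrder α] (a : α) : ∃ x, a < x ∧ T a x := by
  obtain ⟨x, hax, hx⟩ := exists_gt_forall_lt_of_finite (hfin a) a
  refine ⟨x, hax, (treeRel_iff_of_lt hax).2
    ⟨?_, fun c hac hcx hca => (hx c hca hac).not_gt hcx⟩⟩
  exact (total_of pre a x).resolve_right fun hxa => (hx x hxa hax).false

theorem existsUnique_son_gt [NoMaxOrder α] (a : α) :
    ∃! b, a < b ∧ isSon T a b := by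
  obtain ⟨b, ⟨hab, hTab⟩, hbmin⟩ := exists_pre_minimum hfin (exists_gt_treeRel hfin a)
  have hson : isSon T a b := by
    refine ⟨hTab, hab.ne, fun c hTac hTcb => ?_⟩
    by_contra! hc
    rcases lt_or_gt_of_ne hc.1 with hca | hac
    · exact hTcb.2 ⟨a, strictlyBetween_le_iff.2 (Or.inl ⟨hca, hab⟩), hTac.1, hTab.1⟩
    · exact hc.2 (antisymm_of pre hTcb.1 (hbmin c ⟨hac, hTac⟩))
  refine ⟨b, ⟨hab, hson⟩, fun d ⟨had, hd⟩ => ?_⟩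
  have hTbd : T b d := by
    refine ⟨hbmin d ⟨had, hd.1⟩, ?_⟩
    rintro ⟨c, hbtw, hpcb, -⟩
    rcases strictlyBetween_le_iff.1 hbtw with ⟨hbc, hcd⟩ | ⟨hdc, hcb⟩
    · have hTac := treeRel_of_lt_of_le (hab.trans hbc) hcd.le hd.1
      exact hbc.ne' (antisymm_of pre hpcb (hbmin c ⟨hab.trans hbc, hTac⟩))
    · have hTac := treeRel_of_lt_of_le (had.trans hdc) hcb.le hTab
      exact hcb.ne (antisymm_of pre hpcb (hbmin c ⟨had.trans hdc, hTac⟩))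
  exact ((hd.2.2 b hTab hTbd).resolve_left hab.ne').symm

theorem existsUnique_son_lt [NoMinOrder α] (a : α) :
    ∃! b, b < a ∧ isSon T a b := by
  have : IsLinearOrder αᵒᵈ pre := ‹IsLinearOrder α pre›
  have h : ∃! b : α, OrderDual.toDual a < OrderDual.toDual b ∧
      isSon (treeRel (flip (· ≤ ·)) pre) a b :=
    existsUnique_son_gt (α := αᵒᵈ) hfin (OrderDual.toDual a)
  rwa [treeRel_flip] at h

end Tree

/-- For any well-order `⪯` of `ℚ` of order type `ω`, every element of `T(ℚ, ≤, ⪯)` has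
exactly two immediate successors: one `≤`-smaller and one `≤`-larger; in particular
`T(ℚ, ≤, ⪯)` is an infinite binary tree. -/
theorem treeRel_rationals_binary (pre : ℚ → ℚ → Prop)
    (hlin : IsLinearOrder ℚ pre) (homega : ∀ x : ℚ, {y : ℚ | pre y x}.Finite) :
    ∀ a : ℚ, ∃ b c : ℚ, b < a ∧ a < c ∧
      isSon (treeRel (· ≤ ·) pre) a b ∧ isSon (treeRel (· ≤ ·) pre) a c ∧
      ∀ d, isSon (treeRel (· ≤ ·) pre) a d → d = b ∨ d = c := by
  intro a
  obtain ⟨b, ⟨hba, hb⟩, hb_unique⟩ := existsUnique_son_lt homega a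
  obtain ⟨c, ⟨hac, hc⟩, hc_unique⟩ := existsUnique_son_gt homega a
  refine ⟨b, c, hba, hac, hb, hc, fun d hd => ?_⟩
  rcases lt_or_gt_of_ne hd.2.1 with had | hda
  · exact Or.inr (hc_unique d ⟨had, hd⟩)
  · exact Or.inl (hb_unique d ⟨hda, hd⟩)
end

section
/- Let (T, ⊑) be a tree in which every two elements have a meet. Then for every nonempty finite subset S of T with |S| = n, the smallest subset of T containing S and closed under the meet operation has at most 2n − 1 elements. -/
universe u

/-
Adding a point `a` to a meet-closed finite set `K` adds at most two points to the meet-closure: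
`a` itself and `m = a ⊓ x₀`, where `x₀ ∈ K` makes `a ⊓ x₀` largest. Since the predecessors of `a`
form a chain, this maximum exists, and for every `x ∈ K` the two elements `m` and `x₀ ⊓ x ∈ K`
lie below `x₀`, hence are comparable; in either case `a ⊓ x` is one of them. Induction on `|S|`
then gives `1 + 2 (n - 1) = 2n - 1`.
-/

open Set

section SemilatticeInf

variable {α : Type*} [SemilatticeInf α]

theorem isMeet_le_iff {a b m : α} : isMeet (· ≤ ·) a b m ↔ m = a ⊓ b := by
  constructor
  · rintro ⟨hma, hmb, hgreatest⟩
    exact le_antisymm (le_inf hma hmb) (hgreatest _ inf_le_left inf_le_right)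
  · rintro rfl
    exact ⟨inf_le_left, inf_le_right, fun _ => le_inf⟩

theorem meetClosed_le_iff {C : Set α} : MeetClosed (· ≤ ·) C ↔ InfClosed C := by
  simp only [MeetClosed, isMeet_le_iff, forall_eq, InfClosed]

theorem sInter_meetClosed_eq_infClosure (s : Set α) :
    ⋂₀ {C | s ⊆ C ∧ MeetClosed (· ≤ ·) C} = infClosure s := by
  refine (sInter_subset_of_mem ?_).antisymm
    (subset_sInter fun _ hC => infClosure_min hC.1 (meetClosed_le_iff.1 hC.2))
  exact ⟨subset_infClosure, meetClosed_le_iff.2 infClosed_infClosure⟩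

theorem InfClosed.insert_of_inf_mem {s : Set α} {a : α} (hs : InfClosed s)
    (ha : ∀ b ∈ s, a ⊓ b ∈ insert a s) : InfClosed (insert a s) := by
  rintro x (rfl | hx) y (rfl | hy)
  · rw [inf_idem]
    exact mem_insert _ _
  · exact ha y hy
  · rw [inf_comm]
    exact ha x hx
  · exact mem_insert_of_mem _ (hs hx hy)

theorem exists_forall_inf_le_inf (hchain : ∀ a : α, IsChain (· ≤ ·) (Iic a)) {K : Set α}
    (hfin : K.Finite) (hne : K.Nonempty) (a : α) :
    ∃ x₀ ∈ K, ∀ x ∈ K, a ⊓ x ≤ a ⊓ x₀ := by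
  obtain ⟨x₀, hx₀, hmax⟩ := hfin.exists_maximalFor (a ⊓ ·) K hne
  refine ⟨x₀, hx₀, fun x hx => ?_⟩
  rcases (hchain a).total (mem_Iic.2 inf_le_left) (mem_Iic.2 inf_le_left) with h | h
  · exact hmax hx h
  · exact h

theorem inf_mem_insert_of_inf_le_inf (hchain : ∀ a : α, IsChain (· ≤ ·) (Iic a))
    {K : Set α} (hK : InfClosed K) {a x₀ x : α} (hx₀ : x₀ ∈ K) (hx : x ∈ K)
    (hmax : a ⊓ x ≤ a ⊓ x₀) : a ⊓ x ∈ insert (a ⊓ x₀) K := by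
  rcases (hchain x₀).total (mem_Iic.2 (inf_le_left : x₀ ⊓ x ≤ x₀)) (mem_Iic.2 inf_le_right)
    with h | h
  · right
    have heq : a ⊓ x = x₀ ⊓ x :=
      le_antisymm (le_inf (hmax.trans inf_le_right) inf_le_right)
        (le_inf (h.trans inf_le_left) inf_le_right)
    exact heq ▸ hK hx₀ hx
  · left
    exact le_antisymm hmax (le_inf inf_le_left (h.trans inf_le_right))

theorem InfClosed.exists_infClosed_insert_insert (hchain : ∀ a : α, IsChain (· ≤ ·) (Iic a))
    {K : Set α} (hK : InfClosed K) (hfin : K.Finite) (hne : K.Nonempty) (a : α) :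
    ∃ m, InfClosed (insert a (insert m K)) := by
  obtain ⟨x₀, hx₀, hmax⟩ := exists_forall_inf_le_inf hchain hfin hne a
  have hmem : ∀ x ∈ K, a ⊓ x ∈ insert (a ⊓ x₀) K := fun x hx =>
    inf_mem_insert_of_inf_le_inf hchain hK hx₀ hx (hmax x hx)
  have hm : ∀ x ∈ K, a ⊓ x₀ ⊓ x = a ⊓ x := fun x hx =>
    le_antisymm (inf_le_inf_right x inf_le_left) (le_inf (hmax x hx) inf_le_right)
  refine ⟨a ⊓ x₀, (hK.insert_of_inf_mem fun x hx => hm x hx ▸ hmem x hx).insert_of_inf_mem ?_⟩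
  rintro b (rfl | hb)
  · rw [← inf_assoc, inf_idem]
    exact mem_insert_of_mem _ (mem_insert _ _)
  · exact mem_insert_of_mem _ (hmem b hb)

theorem ncard_infClosure_le (hchain : ∀ a : α, IsChain (· ≤ ·) (Iic a)) {s : Finset α}
    (hs : s.Nonempty) : (infClosure (s : Set α)).ncard ≤ 2 * s.card - 1 := by
  induction hs using Finset.Nonempty.cons_induction with
  | singleton a => simp
  | cons a s ha hs ih =>
    set K := infClosure (s : Set α)
    have hKfin : K.Finite := s.finite_toSet.infClosure
    obtain ⟨m, hclosed⟩ := infClosed_infClosure.exists_infClosed_insert_insert hchain hKfin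
      (hs.to_set.mono subset_infClosure) a
    have hsub : infClosure (Finset.cons a s ha : Set α) ⊆ insert a (insert m K) := by
      refine infClosure_min ?_ hclosed
      rw [Finset.coe_cons]
      exact insert_subset_insert (subset_infClosure.trans (subset_insert _ _))
    have hscard : 1 ≤ s.card := hs.card_pos
    calc (infClosure (Finset.cons a s ha : Set α)).ncard
        ≤ (insert a (insert m K)).ncard := ncard_le_ncard hsub ((hKfin.insert m).insert a)
      _ ≤ K.ncard + 2 := by
        have := ncard_insert_le a (insert m K)
        have := ncard_insert_le m K
        omega
      _ ≤ 2 * (Finset.cons a s ha).card - 1 := by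
        rw [Finset.card_cons]
        omega

end SemilatticeInf

noncomputable abbrev semilatticeInfOfIsMeet {T : Type*} (r : T → T → Prop)
    (hpo : IsPartialOrder T r) (hmeet : ∀ a b : T, ∃ m, isMeet r a b m) : SemilatticeInf T where
  le := r
  le_refl := hpo.refl
  le_trans := hpo.trans
  le_antisymm := hpo.antisymm
  inf a b := Classical.choose (hmeet a b)
  inf_le_left a b := (Classical.choose_spec (hmeet a b)).1
  inf_le_right a b := (Classical.choose_spec (hmeet a b)).2.1
  le_inf a b c hab hac := (Classical.choose_spec (hmeet b c)).2.2 a hab hac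

/-- In a tree in which every two elements have a meet, the meet-closure of an `n`-element
nonempty finite set has at most `2n − 1` elements. -/
theorem meetClosure_card_le {T : Type u} (r : T → T → Prop) (htree : IsTreeOrder r)
    (hmeet : ∀ a b : T, ∃ m, isMeet r a b m) (n : ℕ) (S : Finset T)
    (hS : S.Nonempty) (hcard : S.card = n) :
    (⋂₀ {C : Set T | ↑S ⊆ C ∧ MeetClosed r C}).ncard ≤ 2 * n - 1 := by
  obtain ⟨hpo, -, hpred⟩ := htree
  let _ := semilatticeInfOfIsMeet r hpo hmeet
  have hchain : ∀ a : T, IsChain (· ≤ ·) (Iic a) := fun a _ hx _ hy _ => (hpred a).1 _ hx _ hy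
  subst hcard
  have hclosure : ⋂₀ {C : Set T | ↑S ⊆ C ∧ MeetClosed r C} = infClosure ↑S :=
    sInter_meetClosed_eq_infClosure _
  rw [hclosure]
  exact ncard_infClosure_le hchain hS
end

section
/- Let ⪯ be any well-order of ℚ of order type ω and let ⊑ be the tree order of T(ℚ, ≤, ⪯). Then there exists a subset X ⊆ ℚ that is order-isomorphic to (ℚ, ≤) and is an antichain in T(ℚ, ≤, ⪯), i.e., no two distinct elements of X are ⊑-comparable. -/
universe u

/-!
Build a binary tree of cells `lo < wL < x < wR < hi` with `wL ⪯ x` and `wR ⪯ x`, in which the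
two children of a cell fill its gaps `(lo, wL)` and `(wR, hi)` and every centre is `⪯`-above
its parent's centre; this is possible because, `⪯` having type `ω`, all but finitely many
points are `⪯`-above any given one. The centres form a countable dense order without endpoints,
hence a copy of `ℚ`. Two distinct centres are separated, strictly between them, by a point
`⪯`-below both: the wall of the ancestor facing the descendant, or the centre of the meet of
two incomparable cells. So neither is `⊑` the other.
-/

open Filter Set

section Separated

variable {α : Type*}

def Separated (le pre : α → α → Prop) (a b : α) : Prop :=
  ∃ c, strictlyBetween le a c b ∧ pre c a ∧ pre c b

theorem strictlyBetween_comm {le : α → α → Prop} {a c b : α} :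
    strictlyBetween le a c b ↔ strictlyBetween le b c a := by
  unfold strictlyBetween
  tauto

theorem Separated.symm {le pre : α → α → Prop} {a b : α} (h : Separated le pre a b) :
    Separated le pre b a :=
  let ⟨c, hc, ha, hb⟩ := h
  ⟨c, strictlyBetween_comm.1 hc, hb, ha⟩

theorem Separated.not_treeRel {le pre : α → α → Prop} {a b : α} (h : Separated le pre a b) :
    ¬ treeRel le pre a b :=
  fun hab => hab.2 h

theorem separated_of_lt_of_lt [LinearOrder α] {pre : α → α → Prop} {a b c : α}
    (hac : a < c) (hcb : c < b) (ha : pre c a) (hb : pre c b) :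
    Separated (· ≤ ·) pre a b :=
  ⟨c, Or.inl ⟨hac.le, hcb.le, hac.ne', hcb.ne⟩, ha, hb⟩

end Separated

theorem eventually_cofinite_pre {α : Type*} {pre : α → α → Prop} [Std.Total pre]
    (homega : ∀ x, {y | pre y x}.Finite) (y : α) : ∀ᶠ x in cofinite, pre y x :=
  (homega y).subset fun _ hx => (total_of pre _ _).resolve_left hx

structure Cell (α : Type*) [LinearOrder α] (pre : α → α → Prop) where
  lo : α
  wL : α
  x : α
  wR : α
  hi : α
  lo_lt_wL : lo < wL
  wL_lt_x : wL < x
  x_lt_wR : x < wR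
  wR_lt_hi : wR < hi
  pre_wL_x : pre wL x
  pre_wR_x : pre wR x

namespace Cell

variable {α : Type*} [LinearOrder α] {pre : α → α → Prop}

def childLo (c : Cell α pre) : Bool → α
  | false => c.lo
  | true => c.wR

def childHi (c : Cell α pre) : Bool → α
  | false => c.wL
  | true => c.hi

theorem childLo_lt_childHi (c : Cell α pre) : ∀ b, c.childLo b < c.childHi b
  | false => c.lo_lt_wL
  | true => c.wR_lt_hi

theorem Ioo_childLo_childHi_subset (c : Cell α pre) :
    ∀ b, Ioo (c.childLo b) (c.childHi b) ⊆ Ioo c.lo c.hi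
  | false => Ioo_subset_Ioo_right (c.wL_lt_x.trans (c.x_lt_wR.trans c.wR_lt_hi)).le
  | true => Ioo_subset_Ioo_left ((c.lo_lt_wL.trans c.wL_lt_x).trans c.x_lt_wR).le

theorem exists_of_lt [DenselyOrdered α] [Std.Total pre] (homega : ∀ x, {y | pre y x}.Finite)
    {lo hi : α} (h : lo < hi) (p : α) : ∃ c : Cell α pre, c.lo = lo ∧ c.hi = hi ∧ pre p c.x := by
  obtain ⟨wL, hlo, hwL⟩ := exists_between h
  obtain ⟨wR, hw, hwR⟩ := exists_between hwL
  have hpre := eventually_cofinite_pre homega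
  obtain ⟨x, ⟨hwLx, hxwR⟩, hwLx', hwRx', hpx⟩ :=
    ((Ioo_infinite hw).frequently_cofinite.and_eventually
      ((hpre wL).and ((hpre wR).and (hpre p)))).exists
  exact ⟨⟨lo, wL, x, wR, hi, hlo, hwLx, hxwR, hwR, hwLx', hwRx'⟩, rfl, rfl, hpx⟩

end Cell

structure Refinement (α : Type*) [LinearOrder α] (pre : α → α → Prop) where
  child : Cell α pre → Bool → Cell α pre
  lo_child : ∀ c b, (child c b).lo = c.childLo b
  hi_child : ∀ c b, (child c b).hi = c.childHi b
  pre_x_child : ∀ c b, pre c.x (child c b).x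

namespace Refinement

variable {α : Type*} [LinearOrder α] {pre : α → α → Prop}

theorem nonempty [DenselyOrdered α] [Std.Total pre] (homega : ∀ x, {y | pre y x}.Finite) :
    Nonempty (Refinement α pre) := by
  choose child hlo hhi hpre using fun (c : Cell α pre) b =>
    Cell.exists_of_lt homega (c.childLo_lt_childHi b) c.x
  exact ⟨⟨child, hlo, hhi, hpre⟩⟩

def descendant (R : Refinement α pre) (c : Cell α pre) : List Bool → Cell α pre
  | [] => c
  | b :: s => R.descendant (R.child c b) s

variable (R : Refinement α pre)

theorem x_descendant_mem_Ioo (c : Cell α pre) (s : List Bool) :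
    (R.descendant c s).x ∈ Ioo c.lo c.hi := by
  induction s generalizing c with
  | nil => exact ⟨c.lo_lt_wL.trans c.wL_lt_x, c.x_lt_wR.trans c.wR_lt_hi⟩
  | cons b s ih =>
    refine c.Ioo_childLo_childHi_subset b ?_
    rw [← R.lo_child, ← R.hi_child]
    exact ih _

theorem x_descendant_false_lt (c : Cell α pre) (s : List Bool) :
    (R.descendant c (false :: s)).x < c.wL := by
  have h := (R.x_descendant_mem_Ioo (R.child c false) s).2
  rw [R.hi_child] at h
  exact h

theorem lt_x_descendant_true (c : Cell α pre) (s : List Bool) :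
    c.wR < (R.descendant c (true :: s)).x := by
  have h := (R.x_descendant_mem_Ioo (R.child c true) s).1
  rw [R.lo_child] at h
  exact h

theorem x_descendant_false_lt_x (c : Cell α pre) (s : List Bool) :
    (R.descendant c (false :: s)).x < c.x :=
  (R.x_descendant_false_lt c s).trans c.wL_lt_x

theorem x_lt_x_descendant_true (c : Cell α pre) (s : List Bool) :
    c.x < (R.descendant c (true :: s)).x :=
  c.x_lt_wR.trans (R.lt_x_descendant_true c s)

theorem exists_x_descendant_lt (c : Cell α pre) (t : List Bool) :
    ∃ u, (R.descendant c u).x < (R.descendant c t).x := by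
  induction t generalizing c with
  | nil => exact ⟨[false], R.x_descendant_false_lt_x c []⟩
  | cons b t ih =>
    obtain ⟨u, hu⟩ := ih (R.child c b)
    exact ⟨b :: u, hu⟩

theorem exists_lt_x_descendant (c : Cell α pre) (t : List Bool) :
    ∃ u, (R.descendant c t).x < (R.descendant c u).x := by
  induction t generalizing c with
  | nil => exact ⟨[true], R.x_lt_x_descendant_true c []⟩
  | cons b t ih =>
    obtain ⟨u, hu⟩ := ih (R.child c b)
    exact ⟨b :: u, hu⟩

theorem exists_x_descendant_between (c : Cell α pre) (s t : List Bool)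
    (h : (R.descendant c s).x < (R.descendant c t).x) :
    ∃ u, (R.descendant c s).x < (R.descendant c u).x ∧
      (R.descendant c u).x < (R.descendant c t).x := by
  induction s generalizing c t with
  | nil =>
    rcases t with _ | ⟨_ | _, t⟩
    · exact absurd h (lt_irrefl _)
    · exact absurd h (R.x_descendant_false_lt_x c t).asymm
    · obtain ⟨u, hu⟩ := R.exists_x_descendant_lt (R.child c true) t
      exact ⟨true :: u, R.x_lt_x_descendant_true c u, hu⟩
  | cons a s ih =>
    rcases t with _ | ⟨b, t⟩
    · cases a
      · obtain ⟨u, hu⟩ := R.exists_lt_x_descendant (R.child c false) s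
        exact ⟨false :: u, hu, R.x_descendant_false_lt_x c u⟩
      · exact absurd h (R.x_lt_x_descendant_true c s).asymm
    · cases a <;> cases b
      · obtain ⟨u, hu⟩ := ih (R.child c false) t h
        exact ⟨false :: u, hu⟩
      · exact ⟨[], R.x_descendant_false_lt_x c s, R.x_lt_x_descendant_true c t⟩
      · exact absurd h ((R.x_descendant_false_lt_x c t).trans (R.x_lt_x_descendant_true c s)).asymm
      · obtain ⟨u, hu⟩ := ih (R.child c true) t h
        exact ⟨true :: u, hu⟩

variable [IsPreorder α pre]

theorem pre_x_descendant (c : Cell α pre) (s : List Bool) :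
    pre c.x (R.descendant c s).x := by
  induction s generalizing c with
  | nil => exact refl_of pre _
  | cons b s ih => exact trans_of pre (R.pre_x_child c b) (ih _)

theorem separated_x_descendant_cons (c : Cell α pre) (b : Bool) (t : List Bool) :
    Separated (· ≤ ·) pre c.x (R.descendant c (b :: t)).x := by
  have hwall {w : α} (hw : pre w c.x) : pre w (R.descendant c (b :: t)).x :=
    trans_of pre hw (R.pre_x_descendant c _)
  cases b
  · exact (separated_of_lt_of_lt (R.x_descendant_false_lt c t) c.wL_lt_x
      (hwall c.pre_wL_x) c.pre_wL_x).symm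
  · exact separated_of_lt_of_lt c.x_lt_wR (R.lt_x_descendant_true c t)
      c.pre_wR_x (hwall c.pre_wR_x)

theorem separated_x_descendant (c : Cell α pre) (s t : List Bool)
    (h : (R.descendant c s).x ≠ (R.descendant c t).x) :
    Separated (· ≤ ·) pre (R.descendant c s).x (R.descendant c t).x := by
  induction s generalizing c t with
  | nil =>
    rcases t with _ | ⟨b, t⟩
    · exact absurd rfl h
    · exact R.separated_x_descendant_cons c b t
  | cons a s ih =>
    rcases t with _ | ⟨b, t⟩
    · exact (R.separated_x_descendant_cons c a s).symm
    · cases a <;> cases b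
      · exact ih (R.child c false) t h
      · exact separated_of_lt_of_lt (R.x_descendant_false_lt_x c s)
          (R.x_lt_x_descendant_true c t) (R.pre_x_descendant c _) (R.pre_x_descendant c _)
      · exact (separated_of_lt_of_lt (R.x_descendant_false_lt_x c t)
          (R.x_lt_x_descendant_true c s) (R.pre_x_descendant c _) (R.pre_x_descendant c _)).symm
      · exact ih (R.child c true) t h

end Refinement

theorem exists_orderIso_rat_pairwise_separated {α : Type*} [LinearOrder α] [DenselyOrdered α]
    [Nontrivial α] {pre : α → α → Prop} [IsPreorder α pre] [Std.Total pre]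
    (homega : ∀ x, {y | pre y x}.Finite) :
    ∃ X : Set α, Nonempty (X ≃o ℚ) ∧ X.Pairwise (Separated (· ≤ ·) pre) := by
  obtain ⟨R⟩ := Refinement.nonempty homega
  obtain ⟨lo, hi, h⟩ := exists_pair_lt α
  obtain ⟨c, -⟩ := Cell.exists_of_lt homega h lo
  let X := range fun s => (R.descendant c s).x
  have : Countable X := (countable_range _).to_subtype
  have : Nonempty X := ⟨⟨_, [], rfl⟩⟩
  have : DenselyOrdered X := ⟨by
    rintro ⟨_, s, rfl⟩ ⟨_, t, rfl⟩ hst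
    obtain ⟨u, hsu, hut⟩ := R.exists_x_descendant_between c s t hst
    exact ⟨⟨_, u, rfl⟩, hsu, hut⟩⟩
  have : NoMinOrder X := ⟨by
    rintro ⟨_, t, rfl⟩
    obtain ⟨u, hu⟩ := R.exists_x_descendant_lt c t
    exact ⟨⟨_, u, rfl⟩, hu⟩⟩
  have : NoMaxOrder X := ⟨by
    rintro ⟨_, t, rfl⟩
    obtain ⟨u, hu⟩ := R.exists_lt_x_descendant c t
    exact ⟨⟨_, u, rfl⟩, hu⟩⟩
  refine ⟨X, Order.iso_of_countable_dense X ℚ, ?_⟩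
  rintro _ ⟨s, rfl⟩ _ ⟨t, rfl⟩ hst
  exact R.separated_x_descendant c s t hst

/-- For any well-order `⪯` of `ℚ` of order type `ω`, there is a subset of `ℚ`
order-isomorphic to `(ℚ, ≤)` that is an antichain in `T(ℚ, ≤, ⪯)`. -/
theorem exists_antichain_copy (pre : ℚ → ℚ → Prop)
    (hlin : IsLinearOrder ℚ pre) (homega : ∀ x : ℚ, {y : ℚ | pre y x}.Finite) :
    ∃ X : Set ℚ, Nonempty (↥X ≃o ℚ) ∧
      ∀ a ∈ X, ∀ b ∈ X, a ≠ b →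
        ¬ treeRel (· ≤ ·) pre a b ∧ ¬ treeRel (· ≤ ·) pre b a := by
  obtain ⟨X, hiso, hsep⟩ := exists_orderIso_rat_pairwise_separated homega
  exact ⟨X, hiso, fun a ha b hb hab =>
    ⟨(hsep ha hb hab).not_treeRel, (hsep hb ha hab.symm).not_treeRel⟩⟩
end

section
/- Let ⪯ be any well-order of ℚ of order type ω, let ⊑ be the tree order of T(ℚ, ≤, ⪯), and let X ⊆ ℚ be order-isomorphic to (ℚ, ≤). Then for every positive integer n and every structure ([2n−1], ≤', ⪯') such that (≤', ⪯') is a compatible pair of linear orders of [2n−1], there exists an n-element subset S of X such that, writing S' for the closure of S under meets in T(ℚ, ≤, ⪯), the structure (S', ≤↾S', ⪯↾S') is isomorphic to ([2n−1], ≤', ⪯') via an isomorphism mapping S onto the set of leaves of the subtree (S', ⊑↾S'). -/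
universe u

/-!
Write `rank x` for the position of `x` in `⪯`. Then `a ⊑ b` iff `a` is the `⪯`-least point of
the closed interval between `a` and `b`, and the meet of `a` and `b` is the `⪯`-least point of
that interval.

The nodes of the shape are placed in `ℚ` one at a time in `⪯'`-order, each at a point of larger
rank than all points placed before. An inner node goes to a point `c` which is `⪯`-least in an
interval `(p, q)` such that `X` accumulates in both `(p, c)` and `(c, q)`; its two subtrees are
later placed inside these two halves, and leaves go to points of `X`. The interval between the
images of two nodes then lies inside the interval attached to their meet, whose image is
therefore the `⪯`-least point there; so `≤`, `⪯`, `⊑` and meets are all preserved.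

A suitable `c` exists because `X` is a copy of `ℚ`: squeeze an increasing and a decreasing
sequence of `X` around a point `w`, and move to the `⪯`-least point of smaller and smaller
intervals around `w`; the ranks increase but stay below that of `w`.
-/

namespace TreeOfOrders

open Set Function

section Rank

variable {α : Type*} {pre : α → α → Prop}

noncomputable def rank (pre : α → α → Prop) (x : α) : ℕ :=
  {y | pre y x ∧ y ≠ x}.ncard

theorem rank_lt_card [Fintype α] (x : α) : rank pre x < Fintype.card α := by
  rw [← Nat.card_eq_fintype_card, ← ncard_univ]
  refine ncard_lt_ncard (ssubset_univ_iff.2 fun h => ?_)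
  exact (h.symm ▸ mem_univ x : x ∈ {y | pre y x ∧ y ≠ x}).2 rfl

variable [IsLinearOrder α pre]

theorem rank_lt_rank (hfin : ∀ x, {y | pre y x}.Finite) {x y : α} (hxy : pre x y)
    (hne : x ≠ y) : rank pre x < rank pre y := by
  refine ncard_lt_ncard ⟨fun z hz => ⟨trans_of pre hz.1 hxy, ?_⟩, fun h => (h ⟨hxy, hne⟩).2 rfl⟩
    ((hfin y).subset fun z hz => hz.1)
  rintro rfl
  exact hz.2 (antisymm hz.1 hxy)

theorem pre_iff_rank_le (hfin : ∀ x, {y | pre y x}.Finite) {x y : α} :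
    pre x y ↔ rank pre x ≤ rank pre y := by
  refine ⟨fun h => ?_, fun h => ?_⟩
  · rcases eq_or_ne x y with rfl | hne
    · exact le_rfl
    · exact (rank_lt_rank hfin h hne).le
  · rcases total_of pre x y with h' | h'
    · exact h'
    · rcases eq_or_ne y x with rfl | hne
      · exact h'
      · exact absurd h (rank_lt_rank hfin h' hne).not_ge

theorem rank_injective (hfin : ∀ x, {y | pre y x}.Finite) : Injective (rank pre) :=
  fun _ _ h => antisymm ((pre_iff_rank_le hfin).2 h.le) ((pre_iff_rank_le hfin).2 h.ge)

theorem rank_lt_add_one_iff (hfin : ∀ x, {y | pre y x}.Finite) {i j : α} {k : ℕ}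
    (hj : rank pre j = k) : rank pre i < k + 1 ↔ rank pre i < k ∨ i = j := by
  rw [Nat.lt_succ_iff_lt_or_eq, ← hj, (rank_injective hfin).eq_iff]

theorem finite_setOf_rank_le (hfin : ∀ x, {y | pre y x}.Finite) (R : ℕ) :
    {x | rank pre x ≤ R}.Finite :=
  (finite_Iic R).preimage (rank_injective hfin).injOn

theorem exists_rank_eq [Fintype α] {k : ℕ} (hk : k < Fintype.card α) :
    ∃ x, rank pre x = k := by
  let f : α → Fin (Fintype.card α) := fun x => ⟨rank pre x, rank_lt_card x⟩
  have hf : Injective f := fun x y h => rank_injective (fun _ => toFinite _) (Fin.val_eq_of_eq h)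
  obtain ⟨x, hx⟩ := ((Fintype.bijective_iff_injective_and_card f).2 ⟨hf, by simp⟩).2 ⟨k, hk⟩
  exact ⟨x, congrArg Fin.val hx⟩

end Rank

section Interval

variable {α : Type*} {le : α → α → Prop}

def btw (le : α → α → Prop) (a c b : α) : Prop :=
  (le a c ∧ le c b) ∨ (le b c ∧ le c a)

theorem btw_comm {a c b : α} : btw le a c b ↔ btw le b c a := Or.comm

theorem strictlyBetween_iff {a c b : α} :
    strictlyBetween le a c b ↔ btw le a c b ∧ c ≠ a ∧ c ≠ b := by
  unfold strictlyBetween btw; tauto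

variable [IsLinearOrder α le]

theorem btw_left (a b : α) : btw le a a b := by
  rcases total_of le a b with h | h
  exacts [Or.inl ⟨refl_of le a, h⟩, Or.inr ⟨h, refl_of le a⟩]

theorem btw_right (a b : α) : btw le a b b := btw_comm.1 (btw_left b a)

theorem eq_of_btw_self {a c : α} (h : btw le a c a) : c = a := by
  rcases h with ⟨h1, h2⟩ | ⟨h1, h2⟩ <;> exact antisymm h2 h1

theorem le_and_le_of_btw {a c b : α} (h : btw le a c b) (hab : le a b) : le a c ∧ le c b := by
  rcases h with h | ⟨h1, h2⟩
  exacts [h, ⟨trans_of le hab h1, trans_of le h2 hab⟩]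

theorem btw_trans {a w b c : α} (hw : btw le a w b) (hc : btw le a c w) : btw le a c b := by
  rcases hw with ⟨h1, h2⟩ | ⟨h1, h2⟩ <;> rcases hc with ⟨h3, h4⟩ | ⟨h3, h4⟩
  · exact Or.inl ⟨h3, trans_of le h4 h2⟩
  · rw [antisymm h4 (trans_of le h1 h3)]; exact btw_left a b
  · rw [← antisymm h3 (trans_of le h4 h2)]; exact btw_left a b
  · exact Or.inr ⟨trans_of le h1 h3, h4⟩

theorem btw_or_btw {a c b : α} (h : btw le a c b) (w : α) : btw le a c w ∨ btw le w c b := by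
  rcases h with ⟨h1, h2⟩ | ⟨h1, h2⟩ <;> rcases total_of le c w with h | h
  exacts [Or.inl (Or.inl ⟨h1, h⟩), Or.inr (Or.inl ⟨h, h2⟩), Or.inr (Or.inr ⟨h1, h⟩),
    Or.inl (Or.inr ⟨h, h2⟩)]

theorem le_iff_le_of_not_btw {a i b : α} (h : ¬ btw le a i b) : le a i ↔ le b i := by
  constructor
  · intro ha
    by_contra hb
    exact h (Or.inl ⟨ha, (total_of le b i).resolve_left hb⟩)
  · intro hb
    by_contra ha
    exact h (Or.inr ⟨hb, (total_of le a i).resolve_left ha⟩)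

theorem le_iff_le_of_not_btw' {a i b : α} (h : ¬ btw le a i b) : le i a ↔ le i b := by
  constructor
  · intro ha
    by_contra hb
    exact h (Or.inr ⟨(total_of le b i).resolve_right hb, ha⟩)
  · intro hb
    by_contra ha
    exact h (Or.inl ⟨(total_of le a i).resolve_right ha, hb⟩)

theorem btw_iff_btw_of_not_btw {a a' i b b' : α} (ha : ¬ btw le a i a') (hb : ¬ btw le b i b') :
    btw le a i b ↔ btw le a' i b' := by
  unfold btw
  rw [le_iff_le_of_not_btw ha, le_iff_le_of_not_btw hb, le_iff_le_of_not_btw' ha,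
    le_iff_le_of_not_btw' hb]

end Interval

section TreeRel

variable {α : Type*} {le pre : α → α → Prop}

def IsIntervalMin (le pre : α → α → Prop) (a b w : α) : Prop :=
  btw le a w b ∧ ∀ c, btw le a c b → rank pre w ≤ rank pre c

theorem isIntervalMin_comm {a b w : α} : IsIntervalMin le pre a b w ↔ IsIntervalMin le pre b a w :=
  and_congr btw_comm (forall_congr' fun _ => imp_congr_left btw_comm)

variable [IsLinearOrder α le]

theorem exists_isIntervalMin [Finite α] (a b : α) : ∃ w, IsIntervalMin le pre a b w := by
  obtain ⟨w, hw, hmin⟩ := exists_min_image {c | btw le a c b} (rank pre) (toFinite _)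
    ⟨a, btw_left a b⟩
  exact ⟨w, hw, hmin⟩

variable [IsLinearOrder α pre]

theorem treeRel_iff (hfin : ∀ x, {y | pre y x}.Finite) {a b : α} :
    treeRel le pre a b ↔ IsIntervalMin le pre a b a := by
  refine ⟨fun ⟨hab, hno⟩ => ⟨btw_left a b, fun c hc => ?_⟩, fun ⟨_, hmin⟩ => ⟨?_, ?_⟩⟩
  · by_contra hlt
    have hca : pre c a := (pre_iff_rank_le hfin).2 (not_le.1 hlt).le
    refine hno ⟨c, strictlyBetween_iff.2 ⟨hc, ?_, ?_⟩, hca, trans_of pre hca hab⟩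
    · rintro rfl; exact hlt le_rfl
    · rintro rfl; exact hlt ((pre_iff_rank_le hfin).1 hab)
  · exact (pre_iff_rank_le hfin).2 (hmin b (btw_right a b))
  · rintro ⟨c, hc, hca, -⟩
    obtain ⟨hc, hne, -⟩ := strictlyBetween_iff.1 hc
    exact hne (rank_injective hfin (le_antisymm ((pre_iff_rank_le hfin).1 hca) (hmin c hc)))

theorem treeRel_refl (hfin : ∀ x, {y | pre y x}.Finite) (a : α) : treeRel le pre a a :=
  (treeRel_iff hfin).2 ⟨btw_left a a, fun c hc => by rw [eq_of_btw_self hc]⟩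

theorem treeRel_trans (hfin : ∀ x, {y | pre y x}.Finite) {a b c : α}
    (hab : treeRel le pre a b) (hbc : treeRel le pre b c) : treeRel le pre a c := by
  rw [treeRel_iff hfin] at hab hbc ⊢
  refine ⟨btw_left a c, fun x hx => ?_⟩
  rcases btw_or_btw hx b with h | h
  · exact hab.2 x h
  · exact (hab.2 b (btw_right a b)).trans (hbc.2 x h)

theorem treeRel_total_of_treeRel (hfin : ∀ x, {y | pre y x}.Finite) {x y d : α}
    (hx : treeRel le pre x d) (hy : treeRel le pre y d) :
    treeRel le pre x y ∨ treeRel le pre y x := by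
  rw [treeRel_iff hfin] at hx hy
  have key : ∀ {x y}, IsIntervalMin le pre x d x → IsIntervalMin le pre y d y →
      rank pre x ≤ rank pre y → treeRel le pre x y := fun {x y} hx hy hxy =>
    (treeRel_iff hfin).2 ⟨btw_left x y, fun z hz => (btw_or_btw hz d).elim (hx.2 z)
      fun h => hxy.trans (hy.2 z (btw_comm.1 h))⟩
  rcases le_total (rank pre x) (rank pre y) with h | h
  exacts [Or.inl (key hx hy h), Or.inr (key hy hx h)]

theorem IsIntervalMin.treeRel_left (hfin : ∀ x, {y | pre y x}.Finite) {a b w : α}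
    (h : IsIntervalMin le pre a b w) : treeRel le pre w a :=
  (treeRel_iff hfin).2 ⟨btw_left w a, fun c hc => h.2 c (btw_trans h.1 (btw_comm.1 hc))⟩

theorem IsIntervalMin.treeRel_right (hfin : ∀ x, {y | pre y x}.Finite) {a b w : α}
    (h : IsIntervalMin le pre a b w) : treeRel le pre w b :=
  (isIntervalMin_comm.1 h).treeRel_left hfin

theorem IsIntervalMin.isMeet (hfin : ∀ x, {y | pre y x}.Finite) {a b w : α}
    (h : IsIntervalMin le pre a b w) : isMeet (treeRel le pre) a b w := by
  refine ⟨h.treeRel_left hfin, h.treeRel_right hfin, fun x hxa hxb => ?_⟩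
  rw [treeRel_iff hfin] at hxa hxb ⊢
  refine ⟨btw_left x w, fun c hc => ?_⟩
  rcases btw_or_btw hc a with h1 | h1
  · exact hxa.2 c h1
  · rcases btw_or_btw (btw_trans h.1 h1) x with h2 | h2
    · exact hxa.2 c (btw_comm.1 h2)
    · exact hxb.2 c h2

/-- The subtree of `b` lies on one side of its strict ancestor `i`. -/
theorem not_btw_of_treeRel (hfin : ∀ x, {y | pre y x}.Finite) {i b d : α}
    (hib : treeRel le pre i b) (hne : i ≠ b) (hbd : treeRel le pre b d) : ¬ btw le b i d :=
  fun h => (rank_lt_rank hfin hib.1 hne).not_ge (((treeRel_iff hfin).1 hbd).2 i h)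

end TreeRel

section FiniteTree

variable {α : Type*} {le pre : α → α → Prop}

theorem card_filter_isSon [Fintype α] [DecidablePred (isLeaf pre)] {i : α}
    [DecidablePred (isSon pre i)] (h : isLeaf pre i ∨ hasTwoSons pre i) :
    (Finset.univ.filter (isSon pre i)).card = if isLeaf pre i then 0 else 2 := by
  classical
  rcases h with hi | ⟨b, c, hbc, hb, hc, hall⟩
  · rw [if_pos hi, Finset.card_eq_zero, Finset.filter_eq_empty_iff]
    exact fun j _ hj => hj.2.1 (hi j hj.1).symm
  · rw [if_neg fun hi => hb.2.1 (hi b hb.1).symm, ← Finset.card_pair hbc]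
    congr 1
    ext j
    simp only [Finset.mem_filter, Finset.mem_univ, true_and, Finset.mem_insert,
      Finset.mem_singleton]
    exact ⟨hall j, by rintro (rfl | rfl) <;> assumption⟩

variable [IsLinearOrder α le] [IsLinearOrder α pre]

theorem isSon_unique (hfin : ∀ x, {y | pre y x}.Finite) {b b' d : α}
    (hb : isSon (treeRel le pre) b d) (hb' : isSon (treeRel le pre) b' d) : b = b' := by
  rcases treeRel_total_of_treeRel hfin hb.1 hb'.1 with h | h
  · exact ((hb.2.2 b' h hb'.1).resolve_right hb'.2.1).symm
  · exact (hb'.2.2 b h hb.1).resolve_right hb.2.1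

variable [Finite α]

theorem exists_isSon_of_treeRel {i d : α} (hid : treeRel le pre i d) (hne : i ≠ d) :
    ∃ b, isSon (treeRel le pre) b d ∧ treeRel le pre i b := by
  have hfin : ∀ x : α, {y | pre y x}.Finite := fun _ => toFinite _
  obtain ⟨b, ⟨hbd, hbne⟩, hmax⟩ := exists_max_image {x | treeRel le pre x d ∧ x ≠ d}
    (rank pre) (toFinite _) ⟨i, hid, hne⟩
  have eq_b : ∀ x, treeRel le pre b x → treeRel le pre x d → x ≠ d → x = b :=
    fun x hbx hxd hxne =>
      rank_injective hfin (le_antisymm (hmax x ⟨hxd, hxne⟩) ((pre_iff_rank_le hfin).1 hbx.1))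
  refine ⟨b, ⟨hbd, hbne, fun x hbx hxd => ?_⟩, ?_⟩
  · by_cases hxne : x = d
    exacts [Or.inr hxne, Or.inl (eq_b x hbx hxd hxne)]
  · rcases treeRel_total_of_treeRel hfin hid hbd with h | h
    · exact h
    · rw [eq_b i h hid hne]
      exact treeRel_refl hfin b

theorem exists_isLeaf_of_treeRel (b : α) :
    ∃ p, treeRel le pre b p ∧ isLeaf (treeRel le pre) p := by
  have hfin : ∀ x : α, {y | pre y x}.Finite := fun _ => toFinite _
  obtain ⟨p, hbp, hmax⟩ := exists_max_image {x | treeRel le pre b x} (rank pre) (toFinite _)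
    ⟨b, treeRel_refl hfin b⟩
  exact ⟨p, hbp, fun x hpx => rank_injective hfin
    (le_antisymm (hmax x (treeRel_trans hfin hbp hpx)) ((pre_iff_rank_le hfin).1 hpx.1))⟩

theorem btw_of_isSon {i b c : α} (hb : isSon (treeRel le pre) i b)
    (hc : isSon (treeRel le pre) i c) (hbc : b ≠ c) : btw le b i c := by
  have hfin : ∀ x : α, {y | pre y x}.Finite := fun _ => toFinite _
  obtain ⟨w, hw⟩ := exists_isIntervalMin (le := le) (pre := pre) b c
  have hiw : treeRel le pre i w := (hw.isMeet hfin).2.2 i hb.1 hc.1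
  rcases hb.2.2 w hiw (hw.treeRel_left hfin) with rfl | rfl
  · exact hw.1
  · rcases hc.2.2 w hiw (hw.treeRel_right hfin) with h | h
    exacts [absurd h.symm hb.2.1, absurd h hbc]

/-- Take a leaf above each of the two sons of `i`; they lie on opposite sides of `i`. -/
theorem exists_isIntervalMin_of_not_isLeaf
    (hbin : ∀ a, isLeaf (treeRel le pre) a ∨ hasTwoSons (treeRel le pre) a) {i : α}
    (hi : ¬ isLeaf (treeRel le pre) i) :
    ∃ p q, isLeaf (treeRel le pre) p ∧ isLeaf (treeRel le pre) q ∧ IsIntervalMin le pre p q i := by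
  have hfin : ∀ x : α, {y | pre y x}.Finite := fun _ => toFinite _
  obtain ⟨b, c, hbc, hb, hc, -⟩ := (hbin i).resolve_left hi
  obtain ⟨p, hbp, hp⟩ := exists_isLeaf_of_treeRel (le := le) (pre := pre) b
  obtain ⟨q, hcq, hq⟩ := exists_isLeaf_of_treeRel (le := le) (pre := pre) c
  have hip := (treeRel_iff hfin).1 (treeRel_trans hfin hb.1 hbp)
  have hiq := (treeRel_iff hfin).1 (treeRel_trans hfin hc.1 hcq)
  refine ⟨p, q, hp, hq, ?_, fun z hz => ?_⟩
  · exact (btw_iff_btw_of_not_btw (not_btw_of_treeRel hfin hb.1 hb.2.1 hbp)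
      (not_btw_of_treeRel hfin hc.1 hc.2.1 hcq)).1 (btw_of_isSon hb hc hbc)
  · rcases btw_or_btw hz i with h | h
    exacts [hip.2 z (btw_comm.1 h), hiq.2 z h]

/-- Count sons: every node but the root has exactly one father, and inner nodes have two sons. -/
theorem two_mul_card_leaves [Fintype α] [Nonempty α] [DecidablePred (isLeaf (treeRel le pre))]
    (hbin : ∀ a, isLeaf (treeRel le pre) a ∨ hasTwoSons (treeRel le pre) a) :
    2 * (Finset.univ.filter (isLeaf (treeRel le pre))).card = Fintype.card α + 1 := by
  classical
  have hfin : ∀ x : α, {y | pre y x}.Finite := fun _ => toFinite _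
  obtain ⟨r, -, hr⟩ := exists_min_image univ (rank pre) (toFinite _) univ_nonempty
  have hroot : ∀ x, treeRel le pre r x :=
    fun x => (treeRel_iff hfin).2 ⟨btw_left r x, fun c _ => hr c (mem_univ c)⟩
  let sons : α → Finset α := fun i => Finset.univ.filter (isSon (treeRel le pre) i)
  have hcover : Finset.univ.erase r = Finset.univ.biUnion sons := by
    ext j
    simp only [sons, Finset.mem_erase, Finset.mem_univ, and_true, Finset.mem_biUnion,
      Finset.mem_filter, true_and]
    refine ⟨fun hj => ?_, ?_⟩
    · obtain ⟨b, hb, -⟩ := exists_isSon_of_treeRel (hroot j) (Ne.symm hj)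
      exact ⟨b, hb⟩
    · rintro ⟨b, hb⟩ rfl
      exact hb.2.1 (antisymm hb.1.1 (hroot b).1)
  have hdisj : (↑(Finset.univ : Finset α) : Set α).PairwiseDisjoint sons := fun b _ b' _ hne =>
    Finset.disjoint_left.2 fun j hj hj' =>
      hne (isSon_unique hfin (Finset.mem_filter.1 hj).2 (Finset.mem_filter.1 hj').2)
  have hsum := Finset.card_biUnion hdisj
  rw [← hcover, Finset.card_erase_of_mem (Finset.mem_univ r), Finset.card_univ,
    Finset.sum_congr rfl fun i _ => card_filter_isSon (hbin i), Finset.sum_ite,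
    Finset.sum_const_zero, Finset.sum_const, smul_eq_mul] at hsum
  have hsplit := Finset.card_filter_add_card_filter_not (s := Finset.univ)
    (isLeaf (treeRel le pre))
  have hpos := Fintype.card_pos (α := α)
  rw [Finset.card_univ] at hsplit
  omega

end FiniteTree

section DenseCopy

variable {β : Type*} [LinearOrder β] {X : Set β}

theorem exists_ordConnected_subset_disjoint {I : Set β} (hI : I.OrdConnected)
    (hXI : (X ∩ I).Infinite) (F : Finset β) :
    ∃ J ⊆ I, J.OrdConnected ∧ (X ∩ J).Infinite ∧ ∀ x ∈ F, x ∉ J := by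
  classical
  induction F using Finset.induction_on with
  | empty => exact ⟨I, subset_rfl, hI, hXI, by simp⟩
  | insert x F _ ih =>
    obtain ⟨J, hJI, hJ, hXJ, hFJ⟩ := ih
    have hsplit : X ∩ J ⊆ X ∩ (J ∩ Iio x) ∪ {x} ∪ X ∩ (J ∩ Ioi x) := by
      rintro y ⟨hyX, hyJ⟩
      rcases lt_trichotomy y x with h | rfl | h
      exacts [Or.inl (Or.inl ⟨hyX, hyJ, h⟩), Or.inl (Or.inr rfl), Or.inr ⟨hyX, hyJ, h⟩]
    have hinf := hXJ.mono hsplit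
    rw [infinite_union, infinite_union] at hinf
    rcases hinf with (h | h) | h
    · refine ⟨J ∩ Iio x, inter_subset_left.trans hJI, hJ.inter ordConnected_Iio, h, ?_⟩
      simp only [Finset.mem_insert, forall_eq_or_imp, mem_inter_iff, mem_Iio, lt_irrefl,
        and_false, not_false_eq_true, true_and]
      exact fun y hy h => hFJ y hy h.1
    · exact absurd h (finite_singleton x).not_infinite
    · refine ⟨J ∩ Ioi x, inter_subset_left.trans hJI, hJ.inter ordConnected_Ioi, h, ?_⟩
      simp only [Finset.mem_insert, forall_eq_or_imp, mem_inter_iff, mem_Ioi, lt_irrefl,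
        and_false, not_false_eq_true, true_and]
      exact fun y hy h => hFJ y hy h.1

theorem exists_strictMono_strictAnti (hX : Nonempty (X ≃o ℚ)) {x y : β} (hx : x ∈ X)
    (hy : y ∈ X) (hxy : x < y) :
    ∃ (u v : ℕ → β) (w : β), StrictMono u ∧ StrictAnti v ∧
      (∀ n, u n ∈ X ∧ x < u n ∧ u n < w) ∧ (∀ n, v n ∈ X ∧ w < v n ∧ v n < y) := by
  obtain ⟨e⟩ := hX
  have hab : e ⟨x, hx⟩ < e ⟨y, hy⟩ := e.lt_iff_lt.2 hxy
  set m := (e ⟨x, hx⟩ + e ⟨y, hy⟩) / 2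
  obtain ⟨u, hu, hu_mem, -⟩ := exists_seq_strictMono_tendsto' (left_lt_add_div_two.2 hab)
  obtain ⟨v, hv, hv_mem, -⟩ := exists_seq_strictAnti_tendsto' (add_div_two_lt_right.2 hab)
  let g : ℚ → β := fun q => e.symm q
  have hg : StrictMono g := (Subtype.strictMono_coe _).comp e.symm.strictMono
  have hgx : g (e ⟨x, hx⟩) = x := by simp [g]
  have hgy : g (e ⟨y, hy⟩) = y := by simp [g]
  refine ⟨g ∘ u, g ∘ v, g m, hg.comp hu, hg.comp_strictAnti hv, fun n => ⟨(e.symm _).2, ?_,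
    hg (hu_mem n).2⟩, fun n => ⟨(e.symm _).2, hg (hv_mem n).1, ?_⟩⟩
  · exact hgx ▸ hg (hu_mem n).1
  · exact hgy ▸ hg (hv_mem n).2

/-- Descent: the `r`-least point `c` of `Ioo p q` has `r c ≤ r w`. Unless `c` separates the two
sequences, replace `Ioo p q` by its part on the side of `w`, whose least rank is larger. -/
theorem exists_rank_min_separating (r : β → ℕ) (hr : Injective r) {u v : ℕ → β} {w : β}
    (hu : StrictMono u) (hv : StrictAnti v) (huw : ∀ n, u n < w) (hwv : ∀ n, w < v n)
    {p q : β} (hp : ∃ n, p < u n) (hq : ∃ n, v n < q) :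
    ∃ p' c q', p ≤ p' ∧ q' ≤ q ∧ (∀ z ∈ Ioo p' q', r c ≤ r z) ∧
      (∃ n, p' < u n) ∧ (∀ n, u n < c) ∧ (∀ n, c < v n) ∧ (∃ n, v n < q') := by
  suffices ∀ d p q, (∃ n, p < u n) → (∃ n, v n < q) → (∀ z ∈ Ioo p q, r w ≤ r z + d) →
      ∃ p' c q', p ≤ p' ∧ q' ≤ q ∧ (∀ z ∈ Ioo p' q', r c ≤ r z) ∧
        (∃ n, p' < u n) ∧ (∀ n, u n < c) ∧ (∀ n, c < v n) ∧ (∃ n, v n < q') from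
    this (r w) p q hp hq fun _ _ => le_add_self
  intro d
  induction d with
  | zero => ?_
  | succ d ih => ?_
  all_goals
    intro p q ⟨n₀, hn₀⟩ ⟨m₀, hm₀⟩ hd
    have hw : w ∈ Ioo p q := ⟨hn₀.trans (huw n₀), (hwv m₀).trans hm₀⟩
    set c := argminOn r (Ioo p q) ⟨w, hw⟩
    have hc : c ∈ Ioo p q := argminOn_mem r _ _
    have hmin : ∀ z ∈ Ioo p q, r c ≤ r z := fun z hz => argminOn_le r _ hz
    by_cases hsep : (∀ n, u n < c) ∧ (∀ n, c < v n)
    · exact ⟨p, c, q, le_rfl, le_rfl, hmin, ⟨n₀, hn₀⟩, hsep.1, hsep.2, ⟨m₀, hm₀⟩⟩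
  · have hcw : c = w := hr (le_antisymm (hmin w hw) (hd c hc))
    exact absurd ⟨fun n => hcw ▸ huw n, fun n => hcw ▸ hwv n⟩ hsep
  · have hd' : ∀ z ∈ Ioo p q, z ≠ c → r w ≤ r z + d := fun z hz hne => by
      have := (hmin z hz).lt_of_ne (hr.ne hne.symm)
      have := hd c hc
      omega
    rw [not_and_or] at hsep
    push Not at hsep
    rcases hsep with ⟨n, hn⟩ | ⟨n, hn⟩
    · obtain ⟨p', c', q', hp', hq', rest⟩ := ih c q ⟨n + 1, hn.trans_lt (hu n.lt_succ_self)⟩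
        ⟨m₀, hm₀⟩ fun z hz => hd' z ⟨hc.1.trans hz.1, hz.2⟩ hz.1.ne'
      exact ⟨p', c', q', hc.1.le.trans hp', hq', rest⟩
    · obtain ⟨p', c', q', hp', hq', rest⟩ := ih p c ⟨n₀, hn₀⟩
        ⟨n + 1, (hv n.lt_succ_self).trans_le hn⟩ fun z hz => hd' z ⟨hz.1, hz.2.trans hc.2⟩ hz.2.ne
      exact ⟨p', c', q', hp', hq'.trans hc.2.le, rest⟩

/-- A node is placed at `pt`, the `pre`-least point of `Ioo lo hi`; its two subtrees are
placed in `Ioo lo pt` and `Ioo pt hi`. -/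
structure Site (β : Type*) where
  lo : β
  pt : β
  hi : β

open Classical in
def Site.half (s : Site β) (left : Prop) : Set β :=
  if left then Ioo s.lo s.pt else Ioo s.pt s.hi

theorem Site.half_subset (s : Site β) (h : s.pt ∈ Icc s.lo s.hi) (left : Prop) :
    s.half left ⊆ Ioo s.lo s.hi := by
  unfold half
  split_ifs
  exacts [Ioo_subset_Ioo_right h.2, Ioo_subset_Ioo_left h.1]

theorem Site.ordConnected_half (s : Site β) (left : Prop) : (s.half left).OrdConnected := by
  unfold half
  split_ifs <;> exact ordConnected_Ioo

theorem exists_site_of_infinite {pre : β → β → Prop} [IsLinearOrder β pre]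
    (hfin : ∀ x, {y | pre y x}.Finite) (hX : Nonempty (X ≃o ℚ)) {I : Set β}
    (hI : I.OrdConnected) (hXI : (X ∩ I).Infinite) (R : ℕ) :
    ∃ s : Site β, Icc s.lo s.hi ⊆ I ∧ R < rank pre s.pt ∧
      (∀ w ∈ Ioo s.lo s.hi, rank pre s.pt ≤ rank pre w) ∧
      (X ∩ Ioo s.lo s.pt).Infinite ∧ (X ∩ Ioo s.pt s.hi).Infinite := by
  obtain ⟨J, hJI, hJ, hXJ, hJR⟩ :=
    exists_ordConnected_subset_disjoint hI hXI (finite_setOf_rank_le hfin R).toFinset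
  obtain ⟨x, ⟨hxX, hxJ⟩, y, ⟨hyX, hyJ⟩, hxy⟩ := hXJ.nontrivial.exists_lt
  obtain ⟨u, v, w, hu, hv, hu_mem, hv_mem⟩ := exists_strictMono_strictAnti hX hxX hyX hxy
  obtain ⟨p, c, q, hxp, hqy, hmin, ⟨n₀, hn₀⟩, huc, hcv, ⟨m₀, hm₀⟩⟩ :=
    exists_rank_min_separating (rank pre) (rank_injective hfin) hu hv (fun n => (hu_mem n).2.2)
      (fun n => (hv_mem n).2.1) ⟨0, (hu_mem 0).2.1⟩ ⟨0, (hv_mem 0).2.2⟩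
  have hpqJ : Icc p q ⊆ J := (Icc_subset_Icc hxp hqy).trans (hJ.out hxJ hyJ)
  refine ⟨⟨p, c, q⟩, hpqJ.trans hJI, ?_, hmin, ?_, ?_⟩
  · by_contra hc
    exact hJR c (by simpa using hc) (hpqJ ⟨(hn₀.trans (huc n₀)).le, ((hcv m₀).trans hm₀).le⟩)
  · refine infinite_of_injective_forall_mem (hu.injective.comp (add_left_injective n₀))
      fun n => ⟨(hu_mem _).1, hn₀.trans_le (hu.monotone (Nat.le_add_left n₀ n)), huc _⟩
  · refine infinite_of_injective_forall_mem (hv.injective.comp (add_left_injective m₀))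
      fun n => ⟨(hv_mem _).1, hcv _, (hv.antitone (Nat.le_add_left m₀ n)).trans_lt hm₀⟩

end DenseCopy

section Placement

variable {α β : Type*} [LinearOrder β] {le' pre' : α → α → Prop} {pre : β → β → Prop}
  {X : Set β} {f : α → Site β} {k : ℕ}

/-- The region allowed for node `j`: the half of its father's site on the side of `j` (all of
`β` for the root). -/
def slot (le' pre' : α → α → Prop) (f : α → Site β) (j : α) : Set β :=
  ⋂ (i) (_ : isSon (treeRel le' pre') i j), (f i).half (le' j i)

structure IsSite (le' pre' : α → α → Prop) (pre : β → β → Prop) (X : Set β) (f : α → Site β)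
    (j : α) (s : Site β) : Prop where
  pt_mem : s.pt ∈ Icc s.lo s.hi
  rank_le : ∀ w ∈ Ioo s.lo s.hi, rank pre s.pt ≤ rank pre w
  mem_of_isLeaf : isLeaf (treeRel le' pre') j → s.pt ∈ X
  infinite_left : ¬ isLeaf (treeRel le' pre') j → (X ∩ Ioo s.lo s.pt).Infinite
  infinite_right : ¬ isLeaf (treeRel le' pre') j → (X ∩ Ioo s.pt s.hi).Infinite
  subset_slot : Icc s.lo s.hi ⊆ slot le' pre' f j

def IsPlacement (le' pre' : α → α → Prop) (pre : β → β → Prop) (X : Set β) (k : ℕ)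
    (f : α → Site β) : Prop :=
  (∀ j, rank pre' j < k → IsSite le' pre' pre X f j (f j)) ∧
    ∀ i j, rank pre' i < rank pre' j → rank pre' j < k → rank pre (f i).pt < rank pre (f j).pt

theorem slot_update [DecidableEq α] {j j' : α} {s : Site β}
    (h : ∀ i, isSon (treeRel le' pre') i j → i ≠ j') :
    slot le' pre' (update f j' s) j = slot le' pre' f j := by
  simp only [slot]
  refine iInter_congr fun i => iInter_congr fun hi => ?_
  rw [update_of_ne (h i hi)]

variable [Fintype α] [IsLinearOrder α pre']

theorem IsPlacement.update [DecidableEq α] (hf : IsPlacement le' pre' pre X k f) {j : α}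
    (hj : rank pre' j = k) {s : Site β} (hs : IsSite le' pre' pre X f j s)
    (hrank : ∀ i, rank pre' i < k → rank pre (f i).pt < rank pre s.pt) :
    IsPlacement le' pre' pre X (k + 1) (Function.update f j s) := by
  have hfin : ∀ x : α, {y | pre' y x}.Finite := fun _ => toFinite _
  have hne : ∀ i, rank pre' i < k → i ≠ j := fun i hi => ne_of_apply_ne (rank pre') (hj ▸ hi.ne)
  refine ⟨fun i hi => ?_, fun i i' hii' hi' => ?_⟩
  · have hslot : slot le' pre' (Function.update f j s) i = slot le' pre' f i :=
      slot_update fun b hb => hne b (by have := rank_lt_rank hfin hb.1.1 hb.2.1; omega)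
    rcases (rank_lt_add_one_iff hfin hj).1 hi with hi | rfl
    · rw [update_of_ne (hne i hi)]
      exact { hf.1 i hi with subset_slot := hslot ▸ (hf.1 i hi).subset_slot }
    · rw [update_self]
      exact { hs with subset_slot := hslot ▸ hs.subset_slot }
  · have hi : rank pre' i < k := by omega
    rw [update_of_ne (hne i hi)]
    rcases (rank_lt_add_one_iff hfin hj).1 hi' with hi' | rfl
    · rw [update_of_ne (hne i' hi')]
      exact hf.2 i i' hii' hi'
    · rw [update_self]
      exact hrank i hi

variable [IsLinearOrder α le'] [IsLinearOrder β pre]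

theorem IsPlacement.exists_isSite (hfin : ∀ x, {y | pre y x}.Finite) (hX : Nonempty (X ≃o ℚ))
    (hf : IsPlacement le' pre' pre X k f) {j : α} (hj : rank pre' j = k) (R : ℕ) :
    ∃ s, IsSite le' pre' pre X f j s ∧ R < rank pre s.pt := by
  have hfin' : ∀ x : α, {y | pre' y x}.Finite := fun _ => toFinite _
  have hslot : (slot le' pre' f j).OrdConnected :=
    ordConnected_iInter fun i => ordConnected_iInter fun _ => (f i).ordConnected_half _
  have hXslot : (X ∩ slot le' pre' f j).Infinite := by
    by_cases hfather : ∃ i, isSon (treeRel le' pre') i j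
    · obtain ⟨i, hi⟩ := hfather
      have hik : rank pre' i < k := hj ▸ rank_lt_rank hfin' hi.1.1 hi.2.1
      have hinner : ¬ isLeaf (treeRel le' pre') i := fun h => hi.2.1 (h j hi.1).symm
      have heq : slot le' pre' f j = (f i).half (le' j i) := by
        refine (iInter₂_subset i hi).antisymm (subset_iInter₂ fun i' hi' => ?_)
        rw [isSon_unique hfin' hi' hi]
      rw [heq, Site.half]
      split_ifs
      exacts [(hf.1 i hik).infinite_left hinner, (hf.1 i hik).infinite_right hinner]
    · push Not at hfather
      obtain ⟨e⟩ := hX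
      simpa [slot, hfather] using infinite_coe_iff.1 (Infinite.of_injective _ e.symm.injective)
  by_cases hleaf : isLeaf (treeRel le' pre') j
  · obtain ⟨x, ⟨hxX, hxslot⟩, hxR⟩ := (hXslot.sdiff (finite_setOf_rank_le hfin R)).nonempty
    refine ⟨⟨x, x, x⟩, ⟨left_mem_Icc.2 le_rfl, by simp, fun _ => hxX, absurd hleaf,
      absurd hleaf, by simpa using hxslot⟩, not_le.1 hxR⟩
  · obtain ⟨s, hsub, hR, hmin, hl, hr⟩ := exists_site_of_infinite hfin hX hslot hXslot R
    obtain ⟨_, -, hlo⟩ := hl.nonempty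
    obtain ⟨_, -, hhi⟩ := hr.nonempty
    exact ⟨s, ⟨⟨(hlo.1.trans hlo.2).le, (hhi.1.trans hhi.2).le⟩, hmin, fun h => absurd h hleaf,
      fun _ => hl, fun _ => hr, hsub⟩, hR⟩

theorem exists_isPlacement (hfin : ∀ x, {y | pre y x}.Finite) (hX : Nonempty (X ≃o ℚ)) :
    ∃ f, IsPlacement le' pre' pre X (Fintype.card α) f := by
  classical
  suffices ∀ k ≤ Fintype.card α, ∃ f, IsPlacement le' pre' pre X k f from this _ le_rfl
  intro k
  induction k with
  | zero =>
    obtain ⟨e⟩ := hX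
    exact fun _ => ⟨fun _ => ⟨e.symm 0, e.symm 0, e.symm 0⟩, by simp [IsPlacement]⟩
  | succ k ih =>
    intro hk
    obtain ⟨f, hf⟩ := ih (by omega)
    obtain ⟨j, hj⟩ := exists_rank_eq (pre := pre') hk
    obtain ⟨s, hs, hR⟩ := hf.exists_isSite hfin hX hj (Finset.univ.sup fun i => rank pre (f i).pt)
    exact ⟨_, hf.update hj hs fun i _ =>
      (Finset.le_sup (f := fun i => rank pre (f i).pt) (Finset.mem_univ i)).trans_lt hR⟩

end Placement

section FullPlacement

variable {α β : Type*} [Fintype α] [LinearOrder β] {le' pre' : α → α → Prop}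
  {pre : β → β → Prop} {X : Set β} {f : α → Site β}

theorem IsPlacement.isSite (hf : IsPlacement le' pre' pre X (Fintype.card α) f) (i : α) :
    IsSite le' pre' pre X f i (f i) :=
  hf.1 i (rank_lt_card i)

variable [IsLinearOrder α pre']

theorem IsPlacement.pre_iff [IsLinearOrder β pre]
    (hf : IsPlacement le' pre' pre X (Fintype.card α) f) (hfin : ∀ x, {y | pre y x}.Finite)
    {i j : α} : pre' i j ↔ pre (f i).pt (f j).pt := by
  have hfin' : ∀ x : α, {y | pre' y x}.Finite := fun _ => toFinite _
  rw [pre_iff_rank_le hfin', pre_iff_rank_le hfin]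
  refine ⟨fun h => ?_, fun h => ?_⟩
  · rcases h.lt_or_eq with h | h
    exacts [(hf.2 i j h (rank_lt_card j)).le, by rw [rank_injective hfin' h]]
  · by_contra h'
    exact h.not_gt (hf.2 j i (not_le.1 h') (rank_lt_card i))

variable [IsLinearOrder α le']

theorem IsPlacement.Icc_subset_half (hf : IsPlacement le' pre' pre X (Fintype.card α) f)
    {i d : α} (hid : treeRel le' pre' i d) (hne : i ≠ d) :
    Icc (f d).lo (f d).hi ⊆ (f i).half (le' d i) := by
  have hfin : ∀ x : α, {y | pre' y x}.Finite := fun _ => toFinite _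
  induction hn : rank pre' d using Nat.strong_induction_on generalizing d with
  | _ n ih =>
  obtain ⟨b, hbd, hib⟩ := exists_isSon_of_treeRel hid hne
  have hsub : Icc (f d).lo (f d).hi ⊆ (f b).half (le' d b) :=
    (hf.isSite d).subset_slot.trans (iInter₂_subset b hbd)
  rcases eq_or_ne i b with rfl | hib'
  · exact hsub
  · have hb := ih _ (hn ▸ rank_lt_rank hfin hbd.1.1 hbd.2.1) hib hib' rfl
    rw [← le_iff_le_of_not_btw (not_btw_of_treeRel hfin hib hib' hbd.1)]
    exact hsub.trans (((f b).half_subset (hf.isSite b).pt_mem _).trans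
      (Ioo_subset_Icc_self.trans hb))

theorem IsPlacement.pt_mem_Ioo (hf : IsPlacement le' pre' pre X (Fintype.card α) f) {m i : α}
    (hmi : treeRel le' pre' m i) (hm : ¬ isLeaf (treeRel le' pre') m) :
    (f i).pt ∈ Ioo (f m).lo (f m).hi := by
  rcases eq_or_ne m i with rfl | hne
  · obtain ⟨_, -, hlo⟩ := ((hf.isSite m).infinite_left hm).nonempty
    obtain ⟨_, -, hhi⟩ := ((hf.isSite m).infinite_right hm).nonempty
    exact ⟨hlo.1.trans hlo.2, hhi.1.trans hhi.2⟩
  · exact (f m).half_subset (hf.isSite m).pt_mem _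
      (hf.Icc_subset_half hmi hne (hf.isSite i).pt_mem)

theorem IsPlacement.pt_lt_of_treeRel (hf : IsPlacement le' pre' pre X (Fintype.card α) f)
    {m x : α} (hmx : treeRel le' pre' m x) (hne : m ≠ x) (hxm : le' x m) :
    (f x).pt < (f m).pt := by
  have h := hf.Icc_subset_half hmx hne (hf.isSite x).pt_mem
  rw [Site.half, if_pos hxm] at h
  exact h.2

theorem IsPlacement.lt_pt_of_treeRel (hf : IsPlacement le' pre' pre X (Fintype.card α) f)
    {m x : α} (hmx : treeRel le' pre' m x) (hne : m ≠ x) (hxm : ¬ le' x m) :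
    (f m).pt < (f x).pt := by
  have h := hf.Icc_subset_half hmx hne (hf.isSite x).pt_mem
  rw [Site.half, if_neg hxm] at h
  exact h.1

theorem IsPlacement.pt_lt_pt (hf : IsPlacement le' pre' pre X (Fintype.card α) f) {i j : α}
    (hij : le' i j) (hne : i ≠ j) : (f i).pt < (f j).pt := by
  have hfin : ∀ x : α, {y | pre' y x}.Finite := fun _ => toFinite _
  obtain ⟨m, hm⟩ := exists_isIntervalMin (le := le') (pre := pre') i j
  obtain ⟨him, hmj⟩ := le_and_le_of_btw hm.1 hij
  rcases eq_or_ne m i with rfl | hmi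
  · exact hf.lt_pt_of_treeRel (hm.treeRel_right hfin) hne fun h => hne (antisymm hij h)
  · refine (hf.pt_lt_of_treeRel (hm.treeRel_left hfin) hmi him).trans_le ?_
    rcases eq_or_ne m j with rfl | hmj'
    · exact le_rfl
    · exact (hf.lt_pt_of_treeRel (hm.treeRel_right hfin) hmj' fun h => hmj' (antisymm hmj h)).le

theorem IsPlacement.le_iff (hf : IsPlacement le' pre' pre X (Fintype.card α) f) {i j : α} :
    le' i j ↔ (f i).pt ≤ (f j).pt := by
  refine ⟨fun h => ?_, fun h => ?_⟩
  · rcases eq_or_ne i j with rfl | hne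
    exacts [le_rfl, (hf.pt_lt_pt h hne).le]
  · by_contra h'
    exact h.not_gt (hf.pt_lt_pt ((total_of le' i j).resolve_left h')
      fun e => h' (e ▸ refl_of le' i))

theorem IsPlacement.injective (hf : IsPlacement le' pre' pre X (Fintype.card α) f) :
    Injective fun i => (f i).pt :=
  fun _ _ h => antisymm (hf.le_iff.2 h.le) (hf.le_iff.2 h.ge)

theorem IsPlacement.btw_iff (hf : IsPlacement le' pre' pre X (Fintype.card α) f) {a c b : α} :
    btw le' a c b ↔ btw (· ≤ ·) (f a).pt (f c).pt (f b).pt := by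
  simp only [btw, hf.le_iff]

theorem IsPlacement.isIntervalMin (hf : IsPlacement le' pre' pre X (Fintype.card α) f)
    {i j m : α} (h : IsIntervalMin le' pre' i j m) :
    IsIntervalMin (· ≤ ·) pre (f i).pt (f j).pt (f m).pt := by
  have hfin : ∀ x : α, {y | pre' y x}.Finite := fun _ => toFinite _
  refine ⟨hf.btw_iff.1 h.1, fun w hw => ?_⟩
  rcases eq_or_ne i j with rfl | hij
  · rw [eq_of_btw_self hw, eq_of_btw_self h.1]
  · have hm : ¬ isLeaf (treeRel le' pre') m := fun hleaf =>
      hij ((hleaf i (h.treeRel_left hfin)).trans (hleaf j (h.treeRel_right hfin)).symm)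
    have hIoo := ordConnected_Ioo.uIcc_subset (hf.pt_mem_Ioo (h.treeRel_left hfin) hm)
      (hf.pt_mem_Ioo (h.treeRel_right hfin) hm)
    exact (hf.isSite m).rank_le w (hIoo (mem_uIcc.2 hw))

variable [IsLinearOrder β pre]

theorem IsPlacement.treeRel_iff (hf : IsPlacement le' pre' pre X (Fintype.card α) f)
    (hfin : ∀ x, {y | pre y x}.Finite) {i j : α} :
    treeRel le' pre' i j ↔ treeRel (· ≤ ·) pre (f i).pt (f j).pt := by
  have hfin' : ∀ x : α, {y | pre' y x}.Finite := fun _ => toFinite _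
  rw [TreeOfOrders.treeRel_iff hfin', TreeOfOrders.treeRel_iff hfin]
  refine ⟨hf.isIntervalMin, fun h => ⟨btw_left i j, fun c hc => ?_⟩⟩
  rw [← pre_iff_rank_le hfin', hf.pre_iff hfin, pre_iff_rank_le hfin]
  exact h.2 _ (hf.btw_iff.1 hc)

theorem IsPlacement.meetClosed_range (hf : IsPlacement le' pre' pre X (Fintype.card α) f)
    (hfin : ∀ x, {y | pre y x}.Finite) :
    MeetClosed (treeRel (· ≤ ·) pre) (range fun i => (f i).pt) := by
  rintro _ ⟨i, rfl⟩ _ ⟨j, rfl⟩ x hx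
  obtain ⟨m, hm⟩ := exists_isIntervalMin (le := le') (pre := pre') i j
  have hmeet := (hf.isIntervalMin hm).isMeet hfin
  exact ⟨m, antisymm (hx.2.2 _ hmeet.1 hmeet.2.1).1 (hmeet.2.2 _ hx.1 hx.2.1).1⟩

theorem IsPlacement.mem_of_meetClosed (hf : IsPlacement le' pre' pre X (Fintype.card α) f)
    (hfin : ∀ x, {y | pre y x}.Finite)
    (hbin : ∀ a, isLeaf (treeRel le' pre') a ∨ hasTwoSons (treeRel le' pre') a) {C : Set β}
    (hC : MeetClosed (treeRel (· ≤ ·) pre) C)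
    (hleaves : ∀ i, isLeaf (treeRel le' pre') i → (f i).pt ∈ C) (i : α) : (f i).pt ∈ C := by
  by_cases hi : isLeaf (treeRel le' pre') i
  · exact hleaves i hi
  · obtain ⟨p, q, hp, hq, hpq⟩ := exists_isIntervalMin_of_not_isLeaf hbin hi
    exact hC _ (hleaves p hp) _ (hleaves q hq) _ ((hf.isIntervalMin hpq).isMeet hfin)

end FullPlacement

end TreeOfOrders

theorem every_copy_realises_every_shape_general (pre : ℚ → ℚ → Prop)
    (hlin : IsLinearOrder ℚ pre) (homega : ∀ x : ℚ, {y : ℚ | pre y x}.Finite)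
    (X : Set ℚ) (hX : Nonempty (↥X ≃o ℚ)) (n : ℕ)
    (le' pre' : Fin (2*n-1) → Fin (2*n-1) → Prop)
    (hcompat : CompatPair le' pre') (hpre' : IsLinearOrder (Fin (2*n-1)) pre') :
    ∃ S : Finset ℚ, ↑S ⊆ X ∧ S.card = n ∧
      ∃ e : Fin (2*n-1) → ℚ, Function.Injective e ∧
        Set.range e = ⋂₀ {C : Set ℚ | ↑S ⊆ C ∧ MeetClosed (treeRel (· ≤ ·) pre) C} ∧
        (∀ i j, le' i j ↔ e i ≤ e j) ∧
        (∀ i j, pre' i j ↔ pre (e i) (e j)) ∧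
        (∀ a ∈ Set.range e,
          (a ∈ S ↔ ∀ b ∈ Set.range e, treeRel (· ≤ ·) pre a b → b = a)) ∧
        e '' {i | isLeaf (treeRel le' pre') i} = ↑S := by
  classical
  obtain ⟨hle', -, ⟨-, ⟨root, -⟩, -⟩, hbin⟩ := hcompat
  have : Nonempty (Fin (2*n-1)) := ⟨root⟩
  obtain ⟨f, hf⟩ := TreeOfOrders.exists_isPlacement (le' := le') (pre' := pre') homega hX
  set e := fun i => (f i).pt
  set leaves := Finset.univ.filter (isLeaf (treeRel le' pre'))
  have hS : ↑(leaves.image e) = e '' {i | isLeaf (treeRel le' pre') i} := by simp [leaves]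
  refine ⟨leaves.image e, ?_, ?_, e, hf.injective, ?_, fun i j => hf.le_iff,
    fun i j => hf.pre_iff homega, ?_, hS.symm⟩
  · rw [hS]
    rintro _ ⟨i, hi, rfl⟩
    exact (hf.isSite i).mem_of_isLeaf hi
  · have : 2 * leaves.card = Fintype.card (Fin (2*n-1)) + 1 :=
      TreeOfOrders.two_mul_card_leaves hbin
    rw [Fintype.card_fin] at this
    rw [Finset.card_image_of_injective _ hf.injective]
    omega
  · refine Set.Subset.antisymm ?_ (Set.sInter_subset_of_mem
      ⟨hS ▸ Set.image_subset_range _ _, hf.meetClosed_range homega⟩)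
    rintro _ ⟨i, rfl⟩
    exact Set.mem_sInter.2 fun C ⟨hSC, hC⟩ => hf.mem_of_meetClosed homega hbin hC
      (fun l hl => hSC (hS ▸ Set.mem_image_of_mem e hl)) i
  · rintro _ ⟨i, rfl⟩
    rw [← Finset.mem_coe, hS, hf.injective.mem_set_image, Set.forall_mem_range]
    exact forall_congr' fun j => imp_congr (hf.treeRel_iff homega) hf.injective.eq_iff.symm

/-- Every copy `X` of `(ℚ, ≤)` in `(ℚ, ≤)` realises every shape: for every compatible pair
of linear orders `(≤', ⪯')` on `[2n−1]` there is an `n`-element `S ⊆ X` whose meet-closure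
`S'` in `T(ℚ, ≤, ⪯)` is isomorphic (with respect to `≤` and `⪯`) to `([2n−1], ≤', ⪯')`
via an isomorphism under which `S`, which is the set of leaves of the subtree
`(S', ⊑↾S')`, corresponds to the set of leaves of `T([2n−1], ≤', ⪯')`. -/
theorem every_copy_realises_every_shape (pre : ℚ → ℚ → Prop)
    (hlin : IsLinearOrder ℚ pre) (homega : ∀ x : ℚ, {y : ℚ | pre y x}.Finite)
    (X : Set ℚ) (hX : Nonempty (↥X ≃o ℚ)) (n : ℕ) (hn : 0 < n)
    (le' pre' : Fin (2*n-1) → Fin (2*n-1) → Prop)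
    (hcompat : CompatPair le' pre') (hpre' : IsLinearOrder (Fin (2*n-1)) pre') :
    ∃ S : Finset ℚ, ↑S ⊆ X ∧ S.card = n ∧
      ∃ e : Fin (2*n-1) → ℚ, Function.Injective e ∧
        Set.range e = ⋂₀ {C : Set ℚ | ↑S ⊆ C ∧ MeetClosed (treeRel (· ≤ ·) pre) C} ∧
        (∀ i j, le' i j ↔ e i ≤ e j) ∧
        (∀ i j, pre' i j ↔ pre (e i) (e j)) ∧
        (∀ a ∈ Set.range e,
          (a ∈ S ↔ ∀ b ∈ Set.range e, treeRel (· ≤ ·) pre a b → b = a)) ∧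
        e '' {i | isLeaf (treeRel le' pre') i} = ↑S :=
  every_copy_realises_every_shape_general pre hlin homega X hX n le' pre' hcompat hpre'
end

section
/- Any two countable graphs, each having the extension property, are isomorphic. -/
universe u v

/-- A graph has the extension property if for any two finite disjoint sets `U`, `W` of
vertices there is a vertex adjacent to every vertex of `U` and to no vertex of `W`. -/
def GraphExt {V : Type u} (G : SimpleGraph V) : Prop :=
  ∀ U W : Finset V, Disjoint U W →
    ∃ a : V, (∀ u ∈ U, G.Adj a u) ∧ (∀ w ∈ W, ¬ G.Adj a w)

section Aux

/-- Strengthened extension property: we can avoid any finite set `S`. -/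
theorem GraphExt.strong {V : Type u} {G : SimpleGraph V} (hG : GraphExt G)
    (U W S : Finset V) (h : Disjoint U W) :
    ∃ a : V, a ∉ S ∧ (∀ u ∈ U, G.Adj a u) ∧ (∀ w ∈ W, ¬ G.Adj a w) := by
  classical
  obtain ⟨b, hb, -⟩ := hG (U ∪ W ∪ S) ∅ (Finset.disjoint_empty_right _)
  have hbU : b ∉ U := fun hbU => (fun h => G.ne_of_adj h rfl) (hb b (by simp [hbU]))
  obtain ⟨a, ha1, ha2⟩ := hG U (insert b W) (by
    rw [Finset.disjoint_insert_right]
    exact ⟨hbU, h⟩)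
  refine ⟨a, ?_, ha1, fun w hw => ha2 w (Finset.mem_insert_of_mem hw)⟩
  intro haS
  exact ha2 b (Finset.mem_insert_self _ _) ((hb a (by simp [haS])).symm)

theorem exists_mem_zip_left {α : Type*} {β : Type*} {l : List α} {m : List β}
    (h : l.length = m.length) {v : α} (hv : v ∈ l) : ∃ w, (v, w) ∈ l.zip m := by
  obtain ⟨i, hi, rfl⟩ := List.mem_iff_getElem.1 hv
  have hz : i < (l.zip m).length := by simp [List.length_zip]; omega
  refine ⟨m[i]'(h ▸ hi), ?_⟩
  have hg := List.getElem_zip (l := l) (l' := m) (i := i) (h := hz)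
  rw [← hg]
  exact List.getElem_mem _

theorem exists_mem_zip_right {α : Type*} {β : Type*} {l : List α} {m : List β}
    (h : l.length = m.length) {w : β} (hw : w ∈ m) : ∃ v, (v, w) ∈ l.zip m := by
  obtain ⟨i, hi, rfl⟩ := List.mem_iff_getElem.1 hw
  have hz : i < (l.zip m).length := by simp [List.length_zip]; omega
  refine ⟨l[i]'(h ▸ hi), ?_⟩
  have hg := List.getElem_zip (l := l) (l' := m) (i := i) (h := hz)
  rw [← hg]
  exact List.getElem_mem _

theorem zip_prefix {α : Type*} {β : Type*} {l1 l2 : List α} {m1 m2 : List β}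
    (h : l1.length = m1.length) (h1 : l1 <+: l2) (h2 : m1 <+: m2) :
    l1.zip m1 <+: l2.zip m2 := by
  obtain ⟨a, rfl⟩ := h1
  obtain ⟨b, rfl⟩ := h2
  rw [List.zip_append h]
  exact ⟨_, rfl⟩

variable {V : Type u} {W : Type v} (G : SimpleGraph V) (H : SimpleGraph W)

/-- `l` and `m` enumerate a partial isomorphism. -/
def Compat (l : List V) (m : List W) : Prop :=
  l.length = m.length ∧ l.Nodup ∧ m.Nodup ∧
    ∀ p ∈ l.zip m, ∀ q ∈ l.zip m, (G.Adj p.1 q.1 ↔ H.Adj p.2 q.2)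

variable {G H}

theorem Compat.symm {l : List V} {m : List W} (h : Compat G H l m) : Compat H G m l := by
  obtain ⟨hlen, hl, hm, hpq⟩ := h
  have hz : m.zip l = (l.zip m).map Prod.swap := by
    rw [show (l.zip m).map Prod.swap = (l.zip m).map (fun p => (p.2, p.1)) from rfl]
    rw [show ((l.zip m).map fun p => (p.2, p.1)) =
      ((l.zip m).map Prod.snd).zip ((l.zip m).map Prod.fst) from (List.zip_map').symm]
    rw [List.map_snd_zip hlen.ge, List.map_fst_zip hlen.le]
  refine ⟨hlen.symm, hm, hl, fun p hp q hq => ?_⟩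
  rw [hz, List.mem_map] at hp hq
  obtain ⟨p', hp', rfl⟩ := hp
  obtain ⟨q', hq', rfl⟩ := hq
  exact (hpq p' hp' q' hq').symm

theorem Compat.snd_injOn {l : List V} {m : List W} (h : Compat G H l m)
    {p q : V × W} (hp : p ∈ l.zip m) (hq : q ∈ l.zip m) (e : p.2 = q.2) : p = q := by
  have hnd : (List.map Prod.snd (l.zip m)).Nodup := by
    rw [List.map_snd_zip h.1.ge]; exact h.2.2.1
  exact List.inj_on_of_nodup_map hnd hp hq e

theorem Compat.fst_injOn {l : List V} {m : List W} (h : Compat G H l m)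
    {p q : V × W} (hp : p ∈ l.zip m) (hq : q ∈ l.zip m) (e : p.1 = q.1) : p = q := by
  have hnd : (List.map Prod.fst (l.zip m)).Nodup := by
    rw [List.map_fst_zip h.1.le]; exact h.2.1
  exact List.inj_on_of_nodup_map hnd hp hq e

open Classical in
theorem Compat.step (hH : GraphExt H) {l : List V} {m : List W} (hc : Compat G H l m)
    (v : V) (hv : v ∉ l) : ∃ w, w ∉ m ∧ Compat G H (l ++ [v]) (m ++ [w]) := by
  obtain ⟨hlen, hl, hm, hpq⟩ := hc
  set Z := l.zip m with hZ
  set U : Finset W := (Z.toFinset.filter (fun p => G.Adj v p.1)).image Prod.snd with hU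
  set N : Finset W := (Z.toFinset.filter (fun p => ¬ G.Adj v p.1)).image Prod.snd with hN
  have hdisj : Disjoint U N := by
    rw [Finset.disjoint_left]
    rintro w hwU hwN
    simp only [hU, hN, Finset.mem_image, Finset.mem_filter, List.mem_toFinset] at hwU hwN
    obtain ⟨p, ⟨hp, hpa⟩, rfl⟩ := hwU
    obtain ⟨q, ⟨hq, hqa⟩, he⟩ := hwN
    have := Compat.snd_injOn (G := G) (H := H) ⟨hlen, hl, hm, hpq⟩ hq hp he
    subst this
    exact hqa hpa
  obtain ⟨w, hwm, hw1, hw2⟩ := hH.strong U N m.toFinset hdisj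
  rw [List.mem_toFinset] at hwm
  have hznew : (l ++ [v]).zip (m ++ [w]) = Z ++ [(v, w)] := by
    rw [List.zip_append hlen]; rfl
  refine ⟨w, hwm, by simp [hlen], by simp [List.nodup_append, hl, hv]; intro a ha h; exact hv (h ▸ ha), by simp [List.nodup_append, hm, hwm]; intro a ha h; exact hwm (h ▸ ha), ?_⟩
  have key : ∀ p ∈ Z, (G.Adj p.1 v ↔ H.Adj p.2 w) := by
    intro p hp
    by_cases hadj : G.Adj v p.1
    · have hpU : p.2 ∈ U := Finset.mem_image_of_mem _ (by simp [hZ, List.mem_toFinset, hp, hadj]; exact hp)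
      have := hw1 _ hpU
      exact ⟨fun _ => this.symm, fun _ => hadj.symm⟩
    · have hpN : p.2 ∈ N := Finset.mem_image_of_mem _ (by simp [hZ, List.mem_toFinset, hp, hadj]; exact hp)
      have := hw2 _ hpN
      exact ⟨fun h' => absurd h'.symm hadj, fun h' => absurd h'.symm this⟩
  rw [hznew]
  intro p hp q hq
  rcases List.mem_append.1 hp with hp | hp <;> rcases List.mem_append.1 hq with hq | hq
  · exact hpq p hp q hq
  · simp only [List.mem_singleton] at hq; subst hq; exact key p hp
  · simp only [List.mem_singleton] at hp; subst hp
    have := key q hq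
    constructor
    · intro h'; exact ((this.1 h'.symm)).symm
    · intro h'; exact ((this.2 h'.symm)).symm
  · simp only [List.mem_singleton] at hp hq; subst hp; subst hq
    simp

theorem Compat.stepB (hG : GraphExt G) {l : List V} {m : List W} (hc : Compat G H l m)
    (w : W) (hw : w ∉ m) : ∃ vv, vv ∉ l ∧ Compat G H (l ++ [vv]) (m ++ [w]) := by
  obtain ⟨vv, hvv, hc'⟩ := Compat.step hG hc.symm w hw
  exact ⟨vv, hvv, hc'.symm⟩

/-- Iterated choice along a step relation. -/
noncomputable def chain {α : Type*} (R : α → ℕ → α → Prop) (a0 : α)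
    (h : ∀ a n, ∃ b, R a n b) : ℕ → α
  | 0 => a0
  | n + 1 => (h (chain R a0 h n) n).choose

theorem chain_succ {α : Type*} (R : α → ℕ → α → Prop) (a0 : α)
    (h : ∀ a n, ∃ b, R a n b) (n : ℕ) :
    R (chain R a0 h n) n (chain R a0 h (n + 1)) :=
  (h (chain R a0 h n) n).choose_spec

end Aux

/-- Any two countable graphs with the extension property are isomorphic. -/
theorem extension_property_graphs_isomorphic {V : Type u} {W : Type v}
    [Countable V] [Countable W] (G : SimpleGraph V) (H : SimpleGraph W)
    (hG : GraphExt G) (hH : GraphExt H) : Nonempty (G ≃g H) := by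
  classical
  have hVne : Nonempty V := (hG ∅ ∅ disjoint_bot_left).elim fun a _ => ⟨a⟩
  have hWne : Nonempty W := (hH ∅ ∅ disjoint_bot_left).elim fun a _ => ⟨a⟩
  obtain ⟨e, he⟩ := exists_surjective_nat V
  obtain ⟨f, hf⟩ := exists_surjective_nat W
  -- the step relation on partial isomorphisms
  set T := {p : List V × List W // Compat G H p.1 p.2} with hT
  set R : T → ℕ → T → Prop := fun p n q =>
    p.1.1 <+: q.1.1 ∧ p.1.2 <+: q.1.2 ∧ e n ∈ q.1.1 ∧ f n ∈ q.1.2 with hR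
  have hstep : ∀ (p : T) (n : ℕ), ∃ q : T, R p n q := by
    rintro ⟨⟨l, m⟩, hc⟩ n
    -- forward step: ensure e n is in the domain
    obtain ⟨l1, m1, hc1, hpre1, hpre2, hmem1⟩ :
        ∃ l1 m1, Compat G H l1 m1 ∧ l <+: l1 ∧ m <+: m1 ∧ e n ∈ l1 := by
      by_cases hv : e n ∈ l
      · exact ⟨l, m, hc, List.prefix_refl l, List.prefix_refl m, hv⟩
      · obtain ⟨w, _, hc'⟩ := hc.step hH (e n) hv
        exact ⟨l ++ [e n], m ++ [w], hc', ⟨[e n], rfl⟩, ⟨[w], rfl⟩, by simp⟩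
    -- backward step: ensure f n is in the codomain
    obtain ⟨l2, m2, hc2, hpre3, hpre4, hmem2⟩ :
        ∃ l2 m2, Compat G H l2 m2 ∧ l1 <+: l2 ∧ m1 <+: m2 ∧ f n ∈ m2 := by
      by_cases hw : f n ∈ m1
      · exact ⟨l1, m1, hc1, List.prefix_refl l1, List.prefix_refl m1, hw⟩
      · obtain ⟨vv, _, hc'⟩ := hc1.stepB hG (f n) hw
        exact ⟨l1 ++ [vv], m1 ++ [f n], hc', ⟨[vv], rfl⟩, ⟨[f n], rfl⟩, by simp⟩
    exact ⟨⟨(l2, m2), hc2⟩, hpre1.trans hpre3, hpre2.trans hpre4,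
      hpre3.subset hmem1, hmem2⟩
  set p0 : T := ⟨([], []), by refine ⟨rfl, List.nodup_nil, List.nodup_nil, ?_⟩; simp⟩ with hp0
  set F : ℕ → T := chain R p0 hstep with hF
  have hFsucc : ∀ n, R (F n) n (F (n + 1)) := fun n => chain_succ R p0 hstep n
  -- monotonicity of the zips
  have hmono : ∀ {k n : ℕ}, k ≤ n → ((F k).1.1).zip ((F k).1.2) <+: ((F n).1.1).zip ((F n).1.2) := by
    intro k n hkn
    induction n with
    | zero => rw [Nat.le_zero.1 hkn]
    | succ n ih =>
      rcases Nat.lt_or_ge k (n + 1) with h' | h'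
      · refine (ih (Nat.le_of_lt_succ h')).trans ?_
        exact zip_prefix (F n).2.1 (hFsucc n).1 (hFsucc n).2.1
      · rw [Nat.le_antisymm hkn h']
  -- the graph of the isomorphism
  set Rel : V → W → Prop := fun v w => ∃ n, (v, w) ∈ ((F n).1.1).zip ((F n).1.2) with hRel
  have ex1 : ∀ v : V, ∃ w, Rel v w := by
    intro v
    obtain ⟨k, rfl⟩ := he v
    obtain ⟨w, hw⟩ := exists_mem_zip_left (F (k + 1)).2.1 (hFsucc k).2.2.1
    exact ⟨w, k + 1, hw⟩
  have ex2 : ∀ w : W, ∃ v, Rel v w := by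
    intro w
    obtain ⟨k, rfl⟩ := hf w
    obtain ⟨v, hv⟩ := exists_mem_zip_right (F (k + 1)).2.1 (hFsucc k).2.2.2
    exact ⟨v, k + 1, hv⟩
  -- common-stage lemma
  have common : ∀ {v w v' w'}, Rel v w → Rel v' w' →
      ∃ n, (v, w) ∈ ((F n).1.1).zip ((F n).1.2) ∧ (v', w') ∈ ((F n).1.1).zip ((F n).1.2) := by
    rintro v w v' w' ⟨n1, h1⟩ ⟨n2, h2⟩
    exact ⟨max n1 n2, (hmono (le_max_left n1 n2)).subset h1,
      (hmono (le_max_right n1 n2)).subset h2⟩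
  have uniq2 : ∀ {v w w'}, Rel v w → Rel v w' → w = w' := by
    intro v w w' h1 h2
    obtain ⟨n, hp, hq⟩ := common h1 h2
    have := (F n).2.fst_injOn hp hq rfl
    exact congrArg Prod.snd this
  have uniq1 : ∀ {v v' w}, Rel v w → Rel v' w → v = v' := by
    intro v v' w h1 h2
    obtain ⟨n, hp, hq⟩ := common h1 h2
    have := (F n).2.snd_injOn hp hq rfl
    exact congrArg Prod.fst this
  -- build the equivalence
  set φ : V → W := fun v => (ex1 v).choose with hφ
  set ψ : W → V := fun w => (ex2 w).choose with hψ
  have hφR : ∀ v, Rel v (φ v) := fun v => (ex1 v).choose_spec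
  have hψR : ∀ w, Rel (ψ w) w := fun w => (ex2 w).choose_spec
  have hadj : ∀ a b : V, H.Adj (φ a) (φ b) ↔ G.Adj a b := by
    intro a b
    obtain ⟨n, hp, hq⟩ := common (hφR a) (hφR b)
    exact ((F n).2.2.2.2 (a, φ a) hp (b, φ b) hq).symm
  refine ⟨⟨⟨φ, ψ, fun v => uniq1 (hψR (φ v)) (hφR v), fun w => uniq2 (hφR (ψ w)) (hψR w)⟩,
    fun {a b} => hadj a b⟩⟩
end

section
/- There exists a 3-uniform hypergraph on a countably infinite vertex set that has the hypergraph extension property (the random countable 3-uniform hypergraph). -/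
universe u v

/-- A 3-uniform hypergraph on `V`: a ternary relation, invariant under permutations of
its arguments and holding only on triples of pairwise-distinct vertices; `rel a b c`
means that `{a, b, c}` is a hyperedge. -/
structure Hypergraph3 (V : Type u) where
  rel : V → V → V → Prop
  symm12 : ∀ a b c, rel a b c → rel b a c
  symm23 : ∀ a b c, rel a b c → rel a c b
  ne : ∀ a b c, rel a b c → a ≠ b ∧ a ≠ c ∧ b ≠ c

/-- The (hypergraph) extension property: for every two finite disjoint sets `U`, `W` of
two-element subsets of vertices (represented as pairs of distinct vertices, disjointness
being understood for the underlying unordered pairs), there is a vertex `a` such that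
`{a, b, c}` is a hyperedge for every `{b, c} ∈ U` and for no `{b, c} ∈ W`. -/
def HypExt {V : Type u} (H : Hypergraph3 V) : Prop :=
  ∀ U W : Set (V × V), U.Finite → W.Finite →
    (∀ p ∈ U, p.1 ≠ p.2) → (∀ p ∈ W, p.1 ≠ p.2) →
    (∀ p ∈ U, ∀ q ∈ W, ¬(q = p ∨ q = (p.2, p.1))) →
    ∃ a : V, (∀ p ∈ U, H.rel a p.1 p.2) ∧ (∀ p ∈ W, ¬ H.rel a p.1 p.2)

/-- The Rado-style ternary relation on ℕ: for distinct `a b c`, the triple is a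
hyperedge iff the pair-code of the two smaller elements is a bit index of the largest. -/
def triRel (a b c : ℕ) : Prop :=
  a ≠ b ∧ a ≠ c ∧ b ≠ c ∧
    Nat.pair (min a (min b c)) (a + b + c - max a (max b c) - min a (min b c))
      ∈ (max a (max b c)).bitIndices.toFinset

lemma triRel_symm12 (a b c : ℕ) (h : triRel a b c) : triRel b a c := by
  obtain ⟨h1, h2, h3, h4⟩ := h
  refine ⟨h1.symm, h3, h2, ?_⟩
  rw [show b + a + c = a + b + c from by ring, max_left_comm, min_left_comm]
  exact h4

lemma triRel_symm23 (a b c : ℕ) (h : triRel a b c) : triRel a c b := by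
  obtain ⟨h1, h2, h3, h4⟩ := h
  refine ⟨h2, h1, h3.symm, ?_⟩
  rw [max_comm c b, min_comm c b, show a + c + b = a + b + c from by ring]
  exact h4

/-- Canonical code of an unordered pair. -/
def pcode (p : ℕ × ℕ) : ℕ := Nat.pair (min p.1 p.2) (max p.1 p.2)

lemma triRel_of_gt {a b c : ℕ} (hb : b < a) (hc : c < a) (hbc : b ≠ c) :
    triRel a b c ↔ pcode (b, c) ∈ a.bitIndices.toFinset := by
  have hmax : max a (max b c) = a := by omega
  have hmin : min a (min b c) = min b c := by omega
  have harith : a + b + c - a - min b c = max b c := by omega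
  constructor
  · rintro ⟨-, -, -, h4⟩
    rwa [hmax, hmin, harith] at h4
  · intro h
    exact ⟨by omega, by omega, hbc, by rwa [hmax, hmin, harith]⟩

/-- There exists a 3-uniform hypergraph on a countably infinite vertex set with the
hypergraph extension property (the random countable 3-uniform hypergraph). -/
theorem exists_random_hypergraph : ∃ H : Hypergraph3 ℕ, HypExt H := by
  refine ⟨⟨triRel, triRel_symm12, triRel_symm23, fun a b c h => ⟨h.1, h.2.1, h.2.2.1⟩⟩, ?_⟩
  intro U W hU hW hUne hWne hdisj
  classical
  set T : Finset (ℕ × ℕ) := hU.toFinset ∪ hW.toFinset with hT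
  set N : ℕ := (T.image pcode).sup id + T.sup (fun p => max p.1 p.2) + 1 with hN
  set F : Finset ℕ := insert N (hU.toFinset.image pcode) with hF
  set a : ℕ := ∑ k ∈ F, 2 ^ k with ha
  have hbits : a.bitIndices.toFinset = F := by
    rw [ha]; exact Finset.toFinset_bitIndices_twoPowSum F
  -- every vertex occurring in U ∪ W is < a
  have hvert : ∀ p ∈ T, p.1 < a ∧ p.2 < a := by
    intro p hp
    have h1 : max p.1 p.2 ≤ T.sup (fun p => max p.1 p.2) :=
      Finset.le_sup (f := fun p => max p.1 p.2) hp
    have h2 : (2 : ℕ) ^ N ≤ a := by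
      rw [ha]
      exact Finset.single_le_sum (f := fun k => 2 ^ k) (fun i _ => Nat.zero_le _)
        (Finset.mem_insert_self N _)
    have h3 : N < 2 ^ N := Nat.lt_two_pow_self
    omega
  -- codes of pairs in T are < N
  have hcode_lt : ∀ p ∈ T, pcode p < N := by
    intro p hp
    have : pcode p ≤ (T.image pcode).sup id :=
      Finset.le_sup (f := id) (Finset.mem_image_of_mem pcode hp)
    omega
  refine ⟨a, ?_, ?_⟩
  · intro p hp
    have hpT : p ∈ T := Finset.mem_union_left _ (hU.mem_toFinset.2 hp)
    obtain ⟨h1, h2⟩ := hvert p hpT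
    show triRel a p.1 p.2
    rw [triRel_of_gt h1 h2 (hUne p hp), show (pcode (p.1, p.2)) = pcode p from by
      simp [pcode]]
    rw [hbits, hF]
    exact Finset.mem_insert_of_mem
      (Finset.mem_image_of_mem pcode (hU.mem_toFinset.2 hp))
  · intro q hq hrel
    have hqT : q ∈ T := Finset.mem_union_right _ (hW.mem_toFinset.2 hq)
    obtain ⟨h1, h2⟩ := hvert q hqT
    replace hrel : triRel a q.1 q.2 := hrel
    rw [triRel_of_gt h1 h2 (hWne q hq), show (pcode (q.1, q.2)) = pcode q from by
      simp [pcode], hbits, hF] at hrel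
    rcases Finset.mem_insert.1 hrel with h | h
    · exact absurd h (by have := hcode_lt q hqT; omega)
    · obtain ⟨p, hpU, hpq⟩ := Finset.mem_image.1 h
      have hpU' : p ∈ U := hU.mem_toFinset.1 hpU
      have hinj := Nat.pair_eq_pair.1 hpq
      have hp12 := hUne p hpU'
      have hq12 := hWne q hq
      refine hdisj p hpU' q hq ?_
      rcases le_or_gt p.1 p.2 with h' | h' <;> rcases le_or_gt q.1 q.2 with h'' | h''
      · left; ext <;> omega
      · right; ext <;> simp <;> omega
      · right; ext <;> simp <;> omega
      · left; ext <;> omega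
end
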